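/- arXiv:1907.09104 — 15 statements merged into one kernel-verified Lean document; each statement's English description precedes it below -/
import Mathlib

section
/- Let (Ω, Σ, μ, P, t) be an epistemic model in which the σ-algebra Σ contains only finitely many sets, each t(ω,·) is monotonic (E ⊆ F measurable implies t(ω,E) ≤ t(ω,F)), and for every ω and all measurable E, F, t(ω,E) = 1 and t(ω,F) = 1 imply t(ω, E ∩ F) = 1; assume (↑t(ω)) is measurable for every ω. Then the model satisfies Positive Certainty of Beliefs (t(ω, (↑t(ω))) = 1 for every ω) if and only if for every p ∈ [0,1] and every measurable E, B^p(E) ⊆ B^1(B^p(E)). -/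
open MeasureTheory

/-- An epistemic model over a measurable space `Ω` with prior `μ`. -/
structure EpiModel (Ω : Type) [MeasurableSpace Ω] (μ : Measure Ω) where
  P : Ω → Set Ω
  t : Ω → Set Ω → ℝ
  prob : IsProbabilityMeasure μ
  P_meas : ∀ ω, MeasurableSet (P ω)
  K_meas : ∀ E : Set Ω, MeasurableSet E → MeasurableSet {ω | P ω ⊆ E}
  t_nonneg : ∀ ω E, 0 ≤ t ω E
  t_le_one : ∀ ω E, t ω E ≤ 1
  t_meas : ∀ E : Set Ω, MeasurableSet E → Measurable fun ω => t ω E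
  P_pos : ∀ ω, 0 < μ (P ω)

namespace EpiModel

variable {Ω : Type} [MeasurableSpace Ω] {μ : Measure Ω}

/-- The `p`-belief operator `B^p`. -/
def B (M : EpiModel Ω μ) (p : ℝ) (E : Set Ω) : Set Ω := {ω | p ≤ M.t ω E}

/-- The qualitative belief operator `K`. -/
def K (M : EpiModel Ω μ) (A : Set Ω) : Set Ω := {ω | M.P ω ⊆ A}

/-- `(↑t(ω))`. -/
def up (M : EpiModel Ω μ) (ω : Ω) : Set Ω :=
  {ω' | ∀ E : Set Ω, MeasurableSet E → M.t ω E ≤ M.t ω' E}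

/-- `(↓t(ω))`. -/
def down (M : EpiModel Ω μ) (ω : Ω) : Set Ω :=
  {ω' | ∀ E : Set Ω, MeasurableSet E → M.t ω' E ≤ M.t ω E}

/-- `[t(ω)] = (↑t(ω)) ∩ (↓t(ω))`. -/
def cl (M : EpiModel Ω μ) (ω : Ω) : Set Ω := M.up ω ∩ M.down ω

/-- Invariance: the prior is the expectation of the posteriors. -/
def Invariance (M : EpiModel Ω μ) : Prop :=
  ∀ E : Set Ω, MeasurableSet E → (μ E).toReal = ∫ ω, M.t ω E ∂μ

/-- Entailment: `t(ω, P(ω)) = 1`. -/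
def Entailment (M : EpiModel Ω μ) : Prop := ∀ ω, M.t ω (M.P ω) = 1

/-- Self-Evidence of Beliefs: `P(ω) ⊆ (↑t(ω))`. -/
def SelfEvidence (M : EpiModel Ω μ) : Prop := ∀ ω, M.P ω ⊆ M.up ω

/-- Each `t(ω,·)` is the restriction of a countably additive probability measure. -/
def AdditiveTypes (M : EpiModel Ω μ) : Prop :=
  ∀ ω, ∃ ν : Measure Ω, IsProbabilityMeasure ν ∧
    ∀ E : Set Ω, MeasurableSet E → M.t ω E = (ν E).toReal

/-- A regular model. -/
def Regular (M : EpiModel Ω μ) : Prop :=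
  M.AdditiveTypes ∧ M.Invariance ∧ M.Entailment ∧ M.SelfEvidence

/-- Each type is the Bayes conditional probability given the information set. -/
def Bayes (M : EpiModel Ω μ) : Prop :=
  ∀ (ω : Ω) (E : Set Ω), MeasurableSet E →
    M.t ω E = (μ (E ∩ M.P ω)).toReal / (μ (M.P ω)).toReal

/-- A discrete environment: countable states, powerset σ-algebra, full-support prior. -/
def Discrete (Ω : Type) [MeasurableSpace Ω] (μ : Measure Ω) : Prop :=
  Countable Ω ∧ (∀ A : Set Ω, MeasurableSet A) ∧ ∀ ω : Ω, 0 < μ {ω}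

/-- `{P(ω)}` forms a partition. -/
def Partitional (M : EpiModel Ω μ) : Prop :=
  (∀ ω, ω ∈ M.P ω) ∧ ∀ ω ω', ω' ∈ M.P ω → M.P ω' = M.P ω

end EpiModel

namespace EpiModel

variable {Ω : Type} [MeasurableSpace Ω] {μ : Measure Ω} (M : EpiModel Ω μ)

theorem measurableSet_B {E : Set Ω} (hE : MeasurableSet E) (p : ℝ) : MeasurableSet (M.B p E) :=
  M.t_meas E hE measurableSet_Ici

theorem up_subset_B {ω : Ω} {E : Set Ω} (hE : MeasurableSet E) {p : ℝ} (hω : ω ∈ M.B p E) :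
    M.up ω ⊆ M.B p E :=
  fun _ hω' => hω.trans (hω' E hE)

theorem up_eq_biInter (ω : Ω) :
    M.up ω = ⋂ E ∈ {E : Set Ω | MeasurableSet E}, M.B (M.t ω E) E := by
  ext ω'
  simp [up, B]

theorem infClosed_setOf_t_eq_one {ω : Ω}
    (hconj : ∀ E F : Set Ω, MeasurableSet E → MeasurableSet F →
      M.t ω E = 1 → M.t ω F = 1 → M.t ω (E ∩ F) = 1) :
    InfClosed {A : Set Ω | MeasurableSet A ∧ M.t ω A = 1} :=
  fun _ ⟨hE, hEt⟩ _ ⟨hF, hFt⟩ => ⟨hE.inter hF, hconj _ _ hE hF hEt hFt⟩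

theorem mem_B_one_B_of_t_up_eq_one {ω : Ω}
    (hmono : ∀ E F : Set Ω, MeasurableSet E → MeasurableSet F → E ⊆ F → M.t ω E ≤ M.t ω F)
    (hup : MeasurableSet (M.up ω)) (hcert : M.t ω (M.up ω) = 1)
    {p : ℝ} {E : Set Ω} (hE : MeasurableSet E) (hω : ω ∈ M.B p E) :
    ω ∈ M.B 1 (M.B p E) :=
  hcert ▸ hmono _ _ hup (M.measurableSet_B hE p) (M.up_subset_B hE hω)

theorem t_B_t_self_eq_one
    (hintro : ∀ p ∈ Set.Icc (0 : ℝ) 1, ∀ E : Set Ω, MeasurableSet E → M.B p E ⊆ M.B 1 (M.B p E))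
    (ω : Ω) {E : Set Ω} (hE : MeasurableSet E) :
    M.t ω (M.B (M.t ω E) E) = 1 :=
  le_antisymm (M.t_le_one _ _)
    (hintro _ ⟨M.t_nonneg ω E, M.t_le_one ω E⟩ E hE (le_refl (M.t ω E)))

/-- `(↑t(ω))` is the finite intersection of the events `B^{t(ω,E)}(E)`, each believed with
certainty at `ω`. -/
theorem t_up_eq_one_of_B_subset_B_one_B (hfin : {E : Set Ω | MeasurableSet E}.Finite) {ω : Ω}
    (hconj : ∀ E F : Set Ω, MeasurableSet E → MeasurableSet F →
      M.t ω E = 1 → M.t ω F = 1 → M.t ω (E ∩ F) = 1)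
    (hintro : ∀ p ∈ Set.Icc (0 : ℝ) 1, ∀ E : Set Ω, MeasurableSet E → M.B p E ⊆ M.B 1 (M.B p E)) :
    M.t ω (M.up ω) = 1 := by
  have hmem : M.up ω ∈ {A : Set Ω | MeasurableSet A ∧ M.t ω A = 1} := by
    rw [up_eq_biInter]
    exact (M.infClosed_setOf_t_eq_one hconj).biInf_mem_of_nonempty hfin
      ⟨∅, MeasurableSet.empty⟩
      fun E hE => ⟨M.measurableSet_B hE _, M.t_B_t_self_eq_one hintro ω hE⟩
  exact hmem.2

end EpiModel

/-- Positive Certainty of Beliefs iff `B^p(E) ⊆ B^1(B^p(E))`. -/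
theorem statement0 {Ω : Type} [MeasurableSpace Ω] {μ : MeasureTheory.Measure Ω}
    (M : EpiModel Ω μ)
    (hfin : {E : Set Ω | MeasurableSet E}.Finite)
    (hmono : ∀ (ω : Ω) (E F : Set Ω), MeasurableSet E → MeasurableSet F → E ⊆ F →
      M.t ω E ≤ M.t ω F)
    (hconj : ∀ (ω : Ω) (E F : Set Ω), MeasurableSet E → MeasurableSet F →
      M.t ω E = 1 → M.t ω F = 1 → M.t ω (E ∩ F) = 1)
    (hup : ∀ ω, MeasurableSet (M.up ω)) :
    (∀ ω, M.t ω (M.up ω) = 1) ↔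
      ∀ p ∈ Set.Icc (0 : ℝ) 1, ∀ E : Set Ω, MeasurableSet E →
        M.B p E ⊆ M.B 1 (M.B p E) :=
  ⟨fun hcert _ _ _ hE _ hω =>
      M.mem_B_one_B_of_t_up_eq_one (hmono _) (hup _) (hcert _) hE hω,
    fun hintro _ => M.t_up_eq_one_of_B_subset_B_one_B hfin (hconj _) hintro⟩
end

section
/- Let (Ω, Σ, μ, P, t) be an epistemic model in which the σ-algebra Σ contains only finitely many sets, each t(ω,·) is monotonic (E ⊆ F measurable implies t(ω,E) ≤ t(ω,F)), for every ω and all measurable E, F, t(ω,E) = 1 and t(ω,F) = 1 imply t(ω, E ∩ F) = 1, and t(ω, Ω) = 1 for every ω; assume (↓t(ω)) is measurable for every ω. Then t(ω, (↓t(ω))) = 1 for every ω if and only if for every p ∈ [0,1] and every measurable E, Ω ∖ B^p(E) ⊆ B^1(Ω ∖ B^p(E)). -/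
open MeasureTheory

/-- Finite conjunction of probability-one events has probability one. -/
lemma conj_sInter {Ω : Type} [MeasurableSpace Ω] {μ : MeasureTheory.Measure Ω}
    (M : EpiModel Ω μ)
    (hconj : ∀ (ω : Ω) (E F : Set Ω), MeasurableSet E → MeasurableSet F →
      M.t ω E = 1 → M.t ω F = 1 → M.t ω (E ∩ F) = 1)
    (huniv : ∀ ω, M.t ω Set.univ = 1) (ω : Ω)
    (s : Set (Set Ω)) (hs : s.Finite) :
    (∀ A ∈ s, MeasurableSet A) → (∀ A ∈ s, M.t ω A = 1) →
      MeasurableSet (⋂₀ s) ∧ M.t ω (⋂₀ s) = 1 := by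
  refine Set.Finite.induction_on (motive := fun s _ => (∀ A ∈ s, MeasurableSet A) →
      (∀ A ∈ s, M.t ω A = 1) → MeasurableSet (⋂₀ s) ∧ M.t ω (⋂₀ s) = 1) s hs ?_ ?_
  · intro _ _; rw [Set.sInter_empty]; exact ⟨MeasurableSet.univ, huniv ω⟩
  · intro a s ha hsf ih hm h1
    obtain ⟨ihm, ih1⟩ := ih (fun A hA => hm A (Set.mem_insert_of_mem _ hA))
      (fun A hA => h1 A (Set.mem_insert_of_mem _ hA))
    rw [Set.sInter_insert]
    exact ⟨(hm a (Set.mem_insert _ _)).inter ihm,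
      hconj ω a _ (hm a (Set.mem_insert _ _)) ihm (h1 a (Set.mem_insert _ _)) ih1⟩

/-- `t(·,(↓t(·))) = 1` iff `¬B^p(E) ⊆ B^1(¬B^p(E))`. -/

theorem statement1 {Ω : Type} [MeasurableSpace Ω] {μ : MeasureTheory.Measure Ω}
    (M : EpiModel Ω μ)
    (hfin : {E : Set Ω | MeasurableSet E}.Finite)
    (hmono : ∀ (ω : Ω) (E F : Set Ω), MeasurableSet E → MeasurableSet F → E ⊆ F →
      M.t ω E ≤ M.t ω F)
    (hconj : ∀ (ω : Ω) (E F : Set Ω), MeasurableSet E → MeasurableSet F →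
      M.t ω E = 1 → M.t ω F = 1 → M.t ω (E ∩ F) = 1)
    (huniv : ∀ ω, M.t ω Set.univ = 1)
    (hdown : ∀ ω, MeasurableSet (M.down ω)) :
    (∀ ω, M.t ω (M.down ω) = 1) ↔
      ∀ p ∈ Set.Icc (0 : ℝ) 1, ∀ E : Set Ω, MeasurableSet E →
        (M.B p E)ᶜ ⊆ M.B 1 ((M.B p E)ᶜ) := by
  have Bmeas : ∀ (p : ℝ) (E : Set Ω), MeasurableSet E → MeasurableSet (M.B p E) := by
    intro p E hE
    exact (M.t_meas E hE) measurableSet_Ici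
  constructor
  · intro h p hp E hE ω hω
    have hωE : M.t ω E < p := lt_of_not_ge hω
    have hsub : M.down ω ⊆ (M.B p E)ᶜ := by
      intro ω' hω' hmem
      exact absurd (le_trans hmem (hω' E hE)) (not_le.mpr hωE)
    have := hmono ω (M.down ω) ((M.B p E)ᶜ) (hdown ω) (Bmeas p E hE).compl hsub
    rw [h ω] at this
    exact this
  · intro h ω
    -- key: for each measurable E, the set S_E = {ω' | t ω' E ≤ t ω E} has t ω S_E = 1
    have key : ∀ E : Set Ω, MeasurableSet E →
        MeasurableSet {ω' | M.t ω' E ≤ M.t ω E} ∧ M.t ω {ω' | M.t ω' E ≤ M.t ω E} = 1 := by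
      intro E hE
      set f := fun ω' => M.t ω' E with hf
      have hfmeas : Measurable f := M.t_meas E hE
      have hrange : (Set.range f).Finite := by
        have hinj : Set.InjOn (fun y => f ⁻¹' {y}) (Set.range f) := by
          intro y hy y' hy' hpre
          obtain ⟨x, hx⟩ := hy
          have hx1 : x ∈ f ⁻¹' {y} := hx
          simp only [Set.ext_iff, Set.mem_preimage, Set.mem_singleton_iff] at hpre
          rw [← hx]; exact (hpre x).mp hx
        apply Set.Finite.of_finite_image _ hinj
        apply hfin.subset
        rintro _ ⟨y, _, rfl⟩
        exact hfmeas (measurableSet_singleton y)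
      set T := {y ∈ Set.range f | M.t ω E < y} with hT
      have hTfin : T.Finite := hrange.subset (Set.sep_subset _ _)
      by_cases hTe : T = ∅
      · have : {ω' | M.t ω' E ≤ M.t ω E} = Set.univ := by
          ext ω'
          simp only [Set.mem_setOf_eq, Set.mem_univ, iff_true]
          by_contra hc
          have : f ω' ∈ T := ⟨⟨ω', rfl⟩, lt_of_not_ge hc⟩
          rw [hTe] at this; exact this
        rw [this]
        exact ⟨MeasurableSet.univ, huniv ω⟩
      · obtain ⟨q, hqT, hqmin⟩ := hTfin.exists_minimalFor id T
          (Set.nonempty_iff_ne_empty.mpr hTe)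
        obtain ⟨⟨x, hx⟩, hq⟩ := hqT
        have hq1 : q ≤ 1 := by rw [← hx]; exact M.t_le_one x E
        have hq0 : 0 ≤ q := le_trans (M.t_nonneg ω E) (le_of_lt hq)
        have hSE : {ω' | M.t ω' E ≤ M.t ω E} = (M.B q E)ᶜ := by
          ext ω'
          simp only [Set.mem_setOf_eq, Set.mem_compl_iff, EpiModel.B, not_le]
          constructor
          · intro hle; exact lt_of_le_of_lt hle hq
          · intro hlt
            by_contra hc
            have hmemT : f ω' ∈ T := ⟨⟨ω', rfl⟩, lt_of_not_ge hc⟩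
            have := hqmin hmemT (le_of_lt hlt)
            simp only [id] at this
            exact absurd (lt_of_le_of_lt this hlt) (lt_irrefl _)
        rw [hSE]
        have hωmem : ω ∈ (M.B q E)ᶜ := by
          simp only [Set.mem_compl_iff, EpiModel.B, Set.mem_setOf_eq, not_le]
          exact hq
        have h1 := h q ⟨hq0, hq1⟩ E hE hωmem
        exact ⟨(Bmeas q E hE).compl,
          le_antisymm (M.t_le_one ω _) h1⟩
    -- now down ω is the finite intersection
    have hdowneq : M.down ω =
        ⋂₀ ((fun E => {ω' | M.t ω' E ≤ M.t ω E}) '' {E | MeasurableSet E}) := by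
      ext ω'
      simp only [Set.sInter_image, Set.mem_iInter, Set.mem_setOf_eq, EpiModel.down]
    have hfin2 : ((fun E => {ω' | M.t ω' E ≤ M.t ω E}) '' {E | MeasurableSet E}).Finite :=
      hfin.image _
    obtain ⟨_, h1⟩ := conj_sInter M hconj huniv ω _ hfin2
      (by rintro _ ⟨E, hE, rfl⟩; exact (key E hE).1)
      (by rintro _ ⟨E, hE, rfl⟩; exact (key E hE).2)
    rw [hdowneq]
    exact h1
end

section
/- Let (Ω, Σ, μ, P, t) be an epistemic model. The model satisfies Self-Evidence of Beliefs (P(ω) ⊆ (↑t(ω)) for every ω) if and only if for every p ∈ [0,1] and every measurable E, B^p(E) ⊆ K(B^p(E)). -/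
open MeasureTheory

namespace EpiModel

variable {Ω : Type} [MeasurableSpace Ω] {μ : Measure Ω}

theorem mem_up_iff_forall_mem_B {ω ω' : Ω} (M : EpiModel Ω μ) :
    ω' ∈ M.up ω ↔ ∀ p ∈ Set.Icc (0 : ℝ) 1, ∀ E : Set Ω, MeasurableSet E →
      ω ∈ M.B p E → ω' ∈ M.B p E := by
  refine ⟨fun h p _ E hE hω => le_trans hω (h E hE), fun h E hE => ?_⟩
  exact h (M.t ω E) ⟨M.t_nonneg ω E, M.t_le_one ω E⟩ E hE (le_refl (M.t ω E))

end EpiModel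

/-- Self-Evidence of Beliefs iff `B^p(E) ⊆ K(B^p(E))`. -/
theorem statement2 {Ω : Type} [MeasurableSpace Ω] {μ : MeasureTheory.Measure Ω}
    (M : EpiModel Ω μ) :
    M.SelfEvidence ↔
      ∀ p ∈ Set.Icc (0 : ℝ) 1, ∀ E : Set Ω, MeasurableSet E →
        M.B p E ⊆ M.K (M.B p E) := by
  simp only [EpiModel.SelfEvidence, Set.subset_def, EpiModel.mem_up_iff_forall_mem_B]
  exact ⟨fun h p hp E hE ω hω ω' hω' => h ω ω' hω' p hp E hE hω,
    fun h ω ω' hω' p hp E hE hω => h p hp E hE ω hω hω'⟩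
end

section
/- Let (Ω, Σ, μ, P, t) be an epistemic model in which (↑t(ω)), (↓t(ω)), and hence [t(ω)] are measurable for every ω. The model is regular (each t(ω,·) is the restriction of a countably additive probability measure on (Ω,Σ), and Invariance, Entailment, and Self-Evidence of Beliefs hold) if and only if the following three conditions hold: (i) t(ω,E) = μ(E ∩ P(ω)) / μ(P(ω)) for every ω and every measurable E; (ii) P(ω) ⊆ [t(ω)] for every ω; and (iii) μ([t(ω)] ∖ P(ω)) = 0 for every ω. -/
open MeasureTheory

namespace EpiModel

variable {Ω : Type} [MeasurableSpace Ω] {μ : Measure Ω}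

lemma mem_cl_iff (M : EpiModel Ω μ) {ω ω' : Ω} :
    ω' ∈ M.cl ω ↔ ∀ E : Set Ω, MeasurableSet E → M.t ω' E = M.t ω E := by
  constructor
  · rintro ⟨h1, h2⟩ E hE
    exact le_antisymm (h2 E hE) (h1 E hE)
  · intro h
    exact ⟨fun E hE => (h E hE).ge, fun E hE => (h E hE).le⟩

lemma self_mem_cl (M : EpiModel Ω μ) (ω : Ω) : ω ∈ M.cl ω :=
  M.mem_cl_iff.2 fun _ _ => rfl

lemma cl_eq_of_mem (M : EpiModel Ω μ) {ω ω' : Ω} (h : ω' ∈ M.cl ω) : M.cl ω' = M.cl ω := by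
  rw [M.mem_cl_iff] at h
  ext x
  rw [M.mem_cl_iff, M.mem_cl_iff]
  constructor
  · intro hx E hE; rw [hx E hE, h E hE]
  · intro hx E hE; rw [hx E hE, ← h E hE]

lemma cl_meas (M : EpiModel Ω μ) (hup : ∀ ω, MeasurableSet (M.up ω))
    (hdown : ∀ ω, MeasurableSet (M.down ω)) (ω : Ω) : MeasurableSet (M.cl ω) :=
  (hup ω).inter (hdown ω)

lemma not_mem_cl_of_not_mem (M : EpiModel Ω μ) {ω ω' x : Ω} (h : ω' ∉ M.cl ω)
    (hx : x ∈ M.cl ω') : x ∉ M.cl ω := by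
  intro hxω
  have e : M.cl ω' = M.cl ω := by rw [← M.cl_eq_of_mem hx, M.cl_eq_of_mem hxω]
  exact h (e ▸ M.self_mem_cl ω')

lemma P_ne_top (M : EpiModel Ω μ) (ω : Ω) : μ (M.P ω) ≠ ⊤ := by
  haveI := M.prob; exact measure_ne_top μ _

lemma P_toReal_pos (M : EpiModel Ω μ) (ω : Ω) : 0 < (μ (M.P ω)).toReal :=
  ENNReal.toReal_pos (M.P_pos ω).ne' (M.P_ne_top ω)

/-- If `P ω ⊆ cl ω` up to null, then `μ (E ∩ cl ω) = μ (E ∩ P ω)`. -/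
lemma measure_inter_cl (M : EpiModel Ω μ) {ω : Ω} (h2 : M.P ω ⊆ M.cl ω)
    (h3 : μ (M.cl ω \ M.P ω) = 0) (E : Set Ω) : μ (E ∩ M.cl ω) = μ (E ∩ M.P ω) := by
  refine le_antisymm ?_ (measure_mono (Set.inter_subset_inter_right E h2))
  have hsub : E ∩ M.cl ω ⊆ (E ∩ M.P ω) ∪ (M.cl ω \ M.P ω) := by
    rintro x ⟨hxE, hxc⟩
    by_cases hxP : x ∈ M.P ω
    · exact Or.inl ⟨hxE, hxP⟩
    · exact Or.inr ⟨hxc, hxP⟩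
  calc μ (E ∩ M.cl ω) ≤ μ ((E ∩ M.P ω) ∪ (M.cl ω \ M.P ω)) := measure_mono hsub
    _ ≤ μ (E ∩ M.P ω) + μ (M.cl ω \ M.P ω) := measure_union_le _ _
    _ = μ (E ∩ M.P ω) := by rw [h3, add_zero]

lemma measure_cl_eq (M : EpiModel Ω μ) {ω : Ω} (h2 : M.P ω ⊆ M.cl ω)
    (h3 : μ (M.cl ω \ M.P ω) = 0) : μ (M.cl ω) = μ (M.P ω) := by
  have := M.measure_inter_cl h2 h3 Set.univ
  rwa [Set.univ_inter, Set.univ_inter] at this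

end EpiModel

namespace EpiModel

variable {Ω : Type} [MeasurableSpace Ω] {μ : Measure Ω}

lemma regular_imp (M : EpiModel Ω μ) (hup : ∀ ω, MeasurableSet (M.up ω))
    (hdown : ∀ ω, MeasurableSet (M.down ω)) (hR : M.Regular) :
    M.Bayes ∧ (∀ ω, M.P ω ⊆ M.cl ω) ∧ ∀ ω, μ (M.cl ω \ M.P ω) = 0 := by
  haveI := M.prob
  obtain ⟨hA, hI, hE, hS⟩ := hR
  have hcl := M.cl_meas hup hdown
  have hcompl : ∀ ω (E : Set Ω), MeasurableSet E → M.t ω Eᶜ = 1 - M.t ω E := by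
    intro ω E hEm
    obtain ⟨ν, hν, hνt⟩ := hA ω
    rw [hνt E hEm, hνt Eᶜ hEm.compl, prob_compl_eq_one_sub hEm,
      ENNReal.toReal_sub_of_le prob_le_one ENNReal.one_ne_top, ENNReal.toReal_one]
  have h2 : ∀ ω, M.P ω ⊆ M.cl ω := by
    intro ω ω' hω'
    refine ⟨hS ω hω', fun E hEm => ?_⟩
    have h := hS ω hω' Eᶜ hEm.compl
    rw [hcompl ω E hEm, hcompl ω' E hEm] at h
    linarith
  have hnu : ∀ ω, ∃ ν : Measure Ω, IsProbabilityMeasure ν ∧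
      (∀ E : Set Ω, MeasurableSet E → M.t ω E = (ν E).toReal) ∧ ν (M.cl ω) = 1 := by
    intro ω
    obtain ⟨ν, hν, hνt⟩ := hA ω
    refine ⟨ν, hν, hνt, ?_⟩
    have h1 : ν (M.P ω) = 1 := by
      have he := hE ω
      rw [hνt _ (M.P_meas ω), ← ENNReal.toReal_one] at he
      exact (ENNReal.toReal_eq_toReal_iff' (measure_ne_top ν _) ENNReal.one_ne_top).1 he
    exact le_antisymm prob_le_one (h1 ▸ measure_mono (h2 ω))
  have hkey : ∀ ω (E : Set Ω), MeasurableSet E →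
      M.t ω E * (μ (M.cl ω)).toReal = (μ (E ∩ M.cl ω)).toReal := by
    intro ω E hEm
    obtain ⟨ν, hν, hνt, hν1⟩ := hnu ω
    have hEc : MeasurableSet (E ∩ M.cl ω) := hEm.inter (hcl ω)
    have hstep : M.t ω E = M.t ω (E ∩ M.cl ω) := by
      rw [hνt E hEm, hνt _ hEc]
      congr 1
      refine le_antisymm ?_ (measure_mono Set.inter_subset_left)
      have hν0 : ν (M.cl ω)ᶜ = 0 := by
        rw [prob_compl_eq_one_sub (hcl ω), hν1, tsub_self]
      calc ν E ≤ ν (E ∩ M.cl ω) + ν (E \ M.cl ω) := measure_le_inter_add_diff ν E _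
        _ ≤ ν (E ∩ M.cl ω) + ν (M.cl ω)ᶜ :=
            add_le_add le_rfl (measure_mono fun x (hx : x ∈ E \ M.cl ω) => hx.2)
        _ = ν (E ∩ M.cl ω) := by rw [hν0, add_zero]
    have hfun : (fun ω' => M.t ω' (E ∩ M.cl ω)) =
        (M.cl ω).indicator (fun _ => M.t ω (E ∩ M.cl ω)) := by
      funext ω'
      by_cases hω' : ω' ∈ M.cl ω
      · rw [Set.indicator_of_mem hω']
        exact (M.mem_cl_iff.1 hω') _ hEc
      · rw [Set.indicator_of_notMem hω']
        obtain ⟨ν', hν', hνt', hν1'⟩ := hnu ω'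
        rw [hνt' _ hEc]
        have hsub : E ∩ M.cl ω ⊆ (M.cl ω')ᶜ := fun x hx hx' =>
          M.not_mem_cl_of_not_mem hω' hx' hx.2
        have h0 : ν' (M.cl ω')ᶜ = 0 := by
          rw [prob_compl_eq_one_sub (hcl ω'), hν1', tsub_self]
        have : ν' (E ∩ M.cl ω) = 0 :=
          le_antisymm (h0 ▸ measure_mono hsub) zero_le
        rw [this, ENNReal.toReal_zero]
    have hInv := hI _ hEc
    rw [hfun, integral_indicator_const _ (hcl ω)] at hInv
    rw [hstep, hInv, smul_eq_mul, mul_comm]; rfl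
  have h3 : ∀ ω, μ (M.cl ω \ M.P ω) = 0 := by
    intro ω
    have hk := hkey ω (M.P ω) (M.P_meas ω)
    rw [hE ω, one_mul, Set.inter_eq_left.2 (h2 ω)] at hk
    have hμ : μ (M.cl ω) = μ (M.P ω) :=
      (ENNReal.toReal_eq_toReal_iff' (measure_ne_top μ _) (measure_ne_top μ _)).1 hk
    rw [measure_diff (h2 ω) (M.P_meas ω).nullMeasurableSet (M.P_ne_top ω), hμ, tsub_self]
  refine ⟨?_, h2, h3⟩
  intro ω E hEm
  have hk := hkey ω E hEm
  rw [M.measure_inter_cl (h2 ω) (h3 ω) E, M.measure_cl_eq (h2 ω) (h3 ω)] at hk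
  rw [eq_div_iff (M.P_toReal_pos ω).ne']
  exact hk

end EpiModel

namespace EpiModel

variable {Ω : Type} [MeasurableSpace Ω] {μ : Measure Ω}

lemma bayes_imp (M : EpiModel Ω μ) (hup : ∀ ω, MeasurableSet (M.up ω))
    (hdown : ∀ ω, MeasurableSet (M.down ω)) (hB : M.Bayes)
    (h2 : ∀ ω, M.P ω ⊆ M.cl ω) (h3 : ∀ ω, μ (M.cl ω \ M.P ω) = 0) :
    M.Regular := by
  haveI := M.prob
  have hcl := M.cl_meas hup hdown
  refine ⟨?_, ?_, ?_, ?_⟩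
  · -- AdditiveTypes
    intro ω
    refine ⟨(μ (M.P ω))⁻¹ • μ.restrict (M.P ω), ⟨?_⟩, ?_⟩
    · rw [Measure.smul_apply, Measure.restrict_apply_univ, smul_eq_mul,
        ENNReal.inv_mul_cancel (M.P_pos ω).ne' (M.P_ne_top ω)]
    · intro E hEm
      rw [hB ω E hEm, Measure.smul_apply, Measure.restrict_apply hEm, smul_eq_mul,
        ENNReal.toReal_mul, ENNReal.toReal_inv, div_eq_mul_inv, mul_comm]
  · -- Invariance
    intro E hEm
    set T : Set (Set Ω) := Set.range M.cl with hT
    have hmble : ∀ C : T, MeasurableSet (C : Set Ω) := by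
      rintro ⟨C, ω, rfl⟩; exact hcl ω
    have hdisj : Pairwise (Function.onFun Disjoint fun C : T => (C : Set Ω)) := by
      rintro ⟨C1, ω1, rfl⟩ ⟨C2, ω2, rfl⟩ hne
      rw [Function.onFun, Set.disjoint_left]
      intro x hx1 hx2
      exact hne (Subtype.ext ((M.cl_eq_of_mem hx1).symm.trans (M.cl_eq_of_mem hx2)))
    haveI hcount : Countable T := by
      have hc := MeasureTheory.Measure.countable_meas_pos_of_disjoint_iUnion
        (μ := μ) hmble hdisj
      have huniv : {i : T | 0 < μ (i : Set Ω)} = Set.univ := by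
        ext ⟨C, ω, rfl⟩
        simp only [Set.mem_setOf_eq, Set.mem_univ, iff_true]
        exact lt_of_lt_of_le (M.P_pos ω) (measure_mono (h2 ω))
      rw [huniv] at hc
      exact Set.countable_univ_iff.1 hc
    choose rep hrep using fun C : T => C.2
    have hUnion : (⋃ C : T, (C : Set Ω)) = Set.univ := by
      refine Set.eq_univ_of_forall fun x => ?_
      exact Set.mem_iUnion.2 ⟨⟨M.cl x, x, rfl⟩, M.self_mem_cl x⟩
    -- each class member: facts
    have hCP : ∀ C : T, μ (E ∩ (C : Set Ω)) = μ (E ∩ M.P (rep C)) := by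
      intro C
      rw [← hrep C]
      exact M.measure_inter_cl (h2 _) (h3 _) E
    have hClP : ∀ C : T, μ (C : Set Ω) = μ (M.P (rep C)) := by
      intro C
      rw [← hrep C]
      exact M.measure_cl_eq (h2 _) (h3 _)
    -- measure side
    have hmeasE : μ E = ∑' C : T, μ (E ∩ (C : Set Ω)) := by
      have : E = ⋃ C : T, E ∩ (C : Set Ω) := by
        rw [← Set.inter_iUnion, hUnion, Set.inter_univ]
      rw [this, measure_iUnion
        (fun C C' hne => ((hdisj hne).mono Set.inter_subset_right Set.inter_subset_right))
        (fun C => hEm.inter (hmble C))]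
      simp_rw [← this]
    -- integral side
    have hint : Integrable (fun ω' => M.t ω' E) μ := by
      refine (integrable_const (1 : ℝ)).mono'
        (M.t_meas E hEm).aestronglyMeasurable
        (Filter.Eventually.of_forall fun ω' => ?_)
      rw [Real.norm_eq_abs, abs_of_nonneg (M.t_nonneg _ _)]
      exact M.t_le_one _ _
    have hsplit : ∫ ω', M.t ω' E ∂μ = ∑' C : T, ∫ ω' in (C : Set Ω), M.t ω' E ∂μ := by
      have h := integral_iUnion (f := fun ω' => M.t ω' E) hmble hdisj
        (hint.integrableOn)
      rw [hUnion, setIntegral_univ] at h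
      exact h
    have hterm : ∀ C : T, ∫ ω' in (C : Set Ω), M.t ω' E ∂μ = (μ (E ∩ (C : Set Ω))).toReal := by
      intro C
      have hEq : Set.EqOn (fun ω' => M.t ω' E) (fun _ => M.t (rep C) E) (C : Set Ω) := by
        intro x hx
        rw [← hrep C] at hx
        exact (M.mem_cl_iff.1 hx) E hEm
      rw [setIntegral_congr_fun (hmble C) hEq, setIntegral_const, hB (rep C) E hEm,
        hCP C, measureReal_def, hClP C, smul_eq_mul, mul_div_cancel₀]
      exact (M.P_toReal_pos (rep C)).ne'
    rw [hsplit, hmeasE, ENNReal.tsum_toReal_eq (fun C => measure_ne_top μ _)]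
    exact tsum_congr fun C => (hterm C).symm
  · -- Entailment
    intro ω
    rw [hB ω (M.P ω) (M.P_meas ω), Set.inter_self, div_self (M.P_toReal_pos ω).ne']
  · -- SelfEvidence
    exact fun ω => (h2 ω).trans Set.inter_subset_left

end EpiModel

/-- Theorem 1: a model is regular iff (i) Bayes conditioning,
(ii) `P(·) ⊆ [t(·)]`, and (iii) `P(·) ⊇ [t(·)]` μ-almost surely. -/
theorem statement4 {Ω : Type} [MeasurableSpace Ω] {μ : MeasureTheory.Measure Ω}
    (M : EpiModel Ω μ)
    (hup : ∀ ω, MeasurableSet (M.up ω)) (hdown : ∀ ω, MeasurableSet (M.down ω)) :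
    M.Regular ↔
      (M.Bayes ∧ (∀ ω, M.P ω ⊆ M.cl ω) ∧ ∀ ω, μ (M.cl ω \ M.P ω) = 0) := by
  constructor
  · exact M.regular_imp hup hdown
  · rintro ⟨hB, h2, h3⟩
    exact M.bayes_imp hup hdown hB h2 h3
end

section
/- Let (Ω, Σ, μ) be a measurable space with a countably additive probability measure μ, let P be a possibility correspondence, and let t and t' be two type mappings such that both (Ω, Σ, μ, P, t) and (Ω, Σ, μ, P, t') are regular epistemic models (with (↑t(ω)), (↓t(ω)), (↑t'(ω)), (↓t'(ω)) measurable for every ω). Then t = t', i.e., t(ω,E) = t'(ω,E) for every ω ∈ Ω and every measurable E. -/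
open MeasureTheory

namespace EpiModel

variable {Ω : Type} [MeasurableSpace Ω] {μ : Measure Ω}

lemma t_mono (M : EpiModel Ω μ) (hadd : M.AdditiveTypes) (ω : Ω)
    {E F : Set Ω} (hE : MeasurableSet E) (hF : MeasurableSet F) (hEF : E ⊆ F) :
    M.t ω E ≤ M.t ω F := by
  obtain ⟨ν, hν, hrep⟩ := hadd ω
  rw [hrep E hE, hrep F hF]
  exact ENNReal.toReal_mono (measure_ne_top ν F) (measure_mono hEF)

lemma t_compl (M : EpiModel Ω μ) (hadd : M.AdditiveTypes) (ω : Ω)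
    {E : Set Ω} (hE : MeasurableSet E) :
    M.t ω Eᶜ = 1 - M.t ω E := by
  obtain ⟨ν, hν, hrep⟩ := hadd ω
  haveI := hν
  rw [hrep _ hE.compl, hrep _ hE, prob_compl_eq_one_sub hE,
    ENNReal.toReal_sub_of_le prob_le_one ENNReal.one_ne_top, ENNReal.toReal_one]

lemma t_inter_of_full (M : EpiModel Ω μ) (hadd : M.AdditiveTypes) (ω : Ω)
    {E S : Set Ω} (hE : MeasurableSet E) (hS : MeasurableSet S)
    (h1 : M.t ω S = 1) : M.t ω (E ∩ S) = M.t ω E := by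
  obtain ⟨ν, hν, hrep⟩ := hadd ω
  haveI := hν
  have hνS : ν S = 1 := by
    rw [hrep _ hS] at h1
    exact (ENNReal.toReal_eq_one_iff _).1 h1
  rw [hrep _ (hE.inter hS), hrep _ hE]
  congr 1
  refine measure_congr (MeasureTheory.inter_ae_eq_left_of_ae_eq_univ ?_)
  rw [Filter.eventuallyEq_set]
  have : ν Sᶜ = 0 := by
    rw [prob_compl_eq_one_sub hS, hνS, tsub_self]
  filter_upwards [measure_eq_zero_iff_ae_notMem.1 this] with x hx
  simp only [Set.mem_univ, iff_true]
  by_contra h; exact hx h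

lemma t_integrable (M : EpiModel Ω μ) (E : Set Ω) (hE : MeasurableSet E) :
    Integrable (fun ω => M.t ω E) μ := by
  haveI := M.prob
  refine ⟨(M.t_meas E hE).aestronglyMeasurable, HasFiniteIntegral.of_bounded (C := 1) ?_⟩
  filter_upwards with ω
  rw [Real.norm_eq_abs, abs_le]
  exact ⟨by linarith [M.t_nonneg ω E], M.t_le_one ω E⟩

lemma bayes_on (M : EpiModel Ω μ) (hreg : M.Regular) (S : Set Ω) (hS : MeasurableSet S)
    (ω₀ : Ω) (hω₀ : ω₀ ∈ S)
    (hconst : ∀ ω ∈ S, ∀ F : Set Ω, MeasurableSet F → M.t ω F = M.t ω₀ F)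
    (hone : ∀ ω ∈ S, M.t ω S = 1)
    (hpos : 0 < μ S)
    {E : Set Ω} (hE : MeasurableSet E) :
    M.t ω₀ E = (μ (E ∩ S)).toReal / (μ S).toReal := by
  obtain ⟨hadd, hinv, hent, hse⟩ := hreg
  haveI := M.prob
  set ind : Ω → ℝ := S.indicator (fun _ => (1:ℝ)) with hind_def
  have hind_int : Integrable ind μ := (integrable_const (1:ℝ)).indicator hS
  have hind_integral : ∫ ω, ind ω ∂μ = (μ S).toReal := by
    rw [hind_def, integral_indicator_const (1:ℝ) hS, smul_eq_mul, mul_one, measureReal_def]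
  have hfS_integral : ∫ ω, M.t ω S ∂μ = (μ S).toReal := (hinv S hS).symm
  have hle : ∀ ω, ind ω ≤ M.t ω S := by
    intro ω
    by_cases hω : ω ∈ S
    · rw [hind_def, Set.indicator_of_mem hω, hone ω hω]
    · rw [hind_def, Set.indicator_of_notMem hω]; exact M.t_nonneg ω S
  have hdiff : (fun ω => M.t ω S - ind ω) =ᵐ[μ] 0 := by
    refine (integral_eq_zero_iff_of_nonneg_ae ?_ ((M.t_integrable S hS).sub hind_int)).1 ?_
    · filter_upwards with ω; simp [sub_nonneg.2 (hle ω)]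
    · simp only [Pi.sub_apply]
      rw [integral_sub (M.t_integrable S hS) hind_int, hfS_integral, hind_integral, sub_self]
  have hEfull : M.t ω₀ (E ∩ S) = M.t ω₀ E :=
    M.t_inter_of_full hadd ω₀ hE hS (hone ω₀ hω₀)
  have hae : (fun ω => M.t ω (E ∩ S)) =ᵐ[μ] fun ω => (M.t ω₀ E) * ind ω := by
    filter_upwards [hdiff] with ω h
    simp only [Pi.zero_apply, sub_eq_zero] at h
    by_cases hω : ω ∈ S
    · rw [hind_def]
      simp only [Set.indicator_of_mem hω, mul_one]
      rw [hconst ω hω _ (hE.inter hS), hEfull]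
    · have h0 : M.t ω S = 0 := by
        rw [h, hind_def, Set.indicator_of_notMem hω]
      have := M.t_mono hadd ω (hE.inter hS) hS Set.inter_subset_right
      have := M.t_nonneg ω (E ∩ S)
      rw [hind_def, Set.indicator_of_notMem hω, mul_zero]
      linarith
  have key : (μ (E ∩ S)).toReal = M.t ω₀ E * (μ S).toReal := by
    rw [hinv _ (hE.inter hS), integral_congr_ae hae, integral_const_mul, hind_integral]
  have hSpos : 0 < (μ S).toReal := ENNReal.toReal_pos hpos.ne' (measure_ne_top μ S)
  rw [key]
  field_simp

end EpiModel

/-- Corollary 1: uniqueness of the type mapping in a regular model. -/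
theorem statement5 {Ω : Type} [MeasurableSpace Ω] {μ : MeasureTheory.Measure Ω}
    (M M' : EpiModel Ω μ) (hP : M.P = M'.P)
    (hup : ∀ ω, MeasurableSet (M.up ω)) (hdown : ∀ ω, MeasurableSet (M.down ω))
    (hup' : ∀ ω, MeasurableSet (M'.up ω)) (hdown' : ∀ ω, MeasurableSet (M'.down ω))
    (hreg : M.Regular) (hreg' : M'.Regular) :
    ∀ (ω : Ω) (E : Set Ω), MeasurableSet E → M.t ω E = M'.t ω E := by
  intro ω₀ E hE
  classical
  set S : Set Ω := (M.up ω₀ ∩ M.down ω₀) ∩ (M'.up ω₀ ∩ M'.down ω₀) with hSdef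
  have hSmeas : MeasurableSet S :=
    (((hup ω₀).inter (hdown ω₀)).inter ((hup' ω₀).inter (hdown' ω₀)))
  obtain ⟨hadd, hinv, hent, hse⟩ := hreg
  obtain ⟨hadd', hinv', hent', hse'⟩ := hreg'
  have hω₀S : ω₀ ∈ S := ⟨⟨fun F hF => le_refl _, fun F hF => le_refl _⟩,
    ⟨fun F hF => le_refl _, fun F hF => le_refl _⟩⟩
  have hconst : ∀ ω ∈ S, ∀ F : Set Ω, MeasurableSet F → M.t ω F = M'.t ω₀ F → True := fun _ _ _ _ _ => trivial
  have hconstM : ∀ ω ∈ S, ∀ F : Set Ω, MeasurableSet F → M.t ω F = M.t ω₀ F := by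
    intro ω hω F hF
    exact le_antisymm (hω.1.2 F hF) (hω.1.1 F hF)
  have hconstM' : ∀ ω ∈ S, ∀ F : Set Ω, MeasurableSet F → M'.t ω F = M'.t ω₀ F := by
    intro ω hω F hF
    exact le_antisymm (hω.2.2 F hF) (hω.2.1 F hF)
  -- S is self-evident
  have hSE : ∀ ω ∈ S, M.P ω ⊆ S := by
    intro ω hω ω' hω'
    have hM : ∀ F : Set Ω, MeasurableSet F → M.t ω' F = M.t ω F := by
      intro F hF
      have h1 : M.t ω F ≤ M.t ω' F := hse ω hω' F hF
      have h2 : M.t ω Fᶜ ≤ M.t ω' Fᶜ := hse ω hω' Fᶜ hF.compl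
      rw [M.t_compl hadd ω hF, M.t_compl hadd ω' hF] at h2
      linarith
    have hω'P' : ω' ∈ M'.P ω := by rw [← hP]; exact hω'
    have hM' : ∀ F : Set Ω, MeasurableSet F → M'.t ω' F = M'.t ω F := by
      intro F hF
      have h1 : M'.t ω F ≤ M'.t ω' F := hse' ω hω'P' F hF
      have h2 : M'.t ω Fᶜ ≤ M'.t ω' Fᶜ := hse' ω hω'P' Fᶜ hF.compl
      rw [M'.t_compl hadd' ω hF, M'.t_compl hadd' ω' hF] at h2
      linarith
    refine ⟨⟨fun F hF => ?_, fun F hF => ?_⟩, ⟨fun F hF => ?_, fun F hF => ?_⟩⟩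
    · rw [hM F hF, hconstM ω hω F hF]
    · rw [hM F hF, hconstM ω hω F hF]
    · rw [hM' F hF, hconstM' ω hω F hF]
    · rw [hM' F hF, hconstM' ω hω F hF]
  have honeM : ∀ ω ∈ S, M.t ω S = 1 := by
    intro ω hω
    have h1 : M.t ω (M.P ω) ≤ M.t ω S :=
      M.t_mono hadd ω (M.P_meas ω) hSmeas (hSE ω hω)
    rw [hent ω] at h1
    exact le_antisymm (M.t_le_one ω S) h1
  have honeM' : ∀ ω ∈ S, M'.t ω S = 1 := by
    intro ω hω
    have h1 : M'.t ω (M'.P ω) ≤ M'.t ω S := by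
      refine M'.t_mono hadd' ω (M'.P_meas ω) hSmeas ?_
      rw [← hP]; exact hSE ω hω
    rw [hent' ω] at h1
    exact le_antisymm (M'.t_le_one ω S) h1
  have hpos : 0 < μ S := lt_of_lt_of_le (M.P_pos ω₀) (measure_mono (hSE ω₀ hω₀S))
  rw [M.bayes_on ⟨hadd, hinv, hent, hse⟩ S hSmeas ω₀ hω₀S hconstM honeM hpos hE,
    M'.bayes_on ⟨hadd', hinv', hent', hse'⟩ S hSmeas ω₀ hω₀S hconstM' honeM' hpos hE]
end

section
/- Let (Ω, Σ, μ, P, t) be a discrete epistemic model (Ω countable, Σ = 2^Ω, and μ({ω}) > 0 for every ω). The model is regular if and only if (i) P(ω) = [t(ω)] for every ω, and (ii) t(ω,E) = μ(E ∩ P(ω)) / μ(P(ω)) for every ω and every E ⊆ Ω. -/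
open MeasureTheory

section Aux

namespace EpiModel

variable {Ω : Type} [MeasurableSpace Ω] {μ : Measure Ω}

lemma aux_mem_cl_iff (M : EpiModel Ω μ) (hmeas : ∀ A : Set Ω, MeasurableSet A) (ω ω' : Ω) :
    ω' ∈ M.cl ω ↔ ∀ E, M.t ω' E = M.t ω E := by
  simp only [cl, up, down, Set.mem_inter_iff, Set.mem_setOf_eq]
  constructor
  · rintro ⟨hup, hdown⟩ E
    exact le_antisymm (hdown E (hmeas E)) (hup E (hmeas E))
  · intro h
    exact ⟨fun E _ => (h E).ge, fun E _ => (h E).le⟩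

lemma aux_cl_eq (M : EpiModel Ω μ) (hmeas : ∀ A : Set Ω, MeasurableSet A) {ω ω' : Ω}
    (h : ω' ∈ M.cl ω) : M.cl ω' = M.cl ω := by
  have ht := (M.aux_mem_cl_iff hmeas ω ω').1 h
  ext x
  rw [M.aux_mem_cl_iff hmeas, M.aux_mem_cl_iff hmeas]
  constructor
  · intro hx E; rw [hx E, ht E]
  · intro hx E; rw [hx E, ← ht E]

end EpiModel

end Aux

/-- Corollary 2.1: a discrete model is regular iff
`P(·) = [t(·)]` and `t(·,·) = μ(· | P(·))`. -/
theorem statement7 {Ω : Type} [MeasurableSpace Ω] {μ : MeasureTheory.Measure Ω}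
    (M : EpiModel Ω μ) (hdisc : EpiModel.Discrete Ω μ) :
    M.Regular ↔
      ((∀ ω, M.P ω = M.cl ω) ∧
        ∀ (ω : Ω) (E : Set Ω),
          M.t ω E = (μ (E ∩ M.P ω)).toReal / (μ (M.P ω)).toReal) := by

  classical
  obtain ⟨hcount, hmeas, hpos⟩ := hdisc
  have _inst : Countable Ω := hcount
  have _sing : MeasurableSingletonClass Ω := ⟨fun a => hmeas {a}⟩
  have _prob : IsProbabilityMeasure μ := M.prob
  have hfin : ∀ s : Set Ω, μ s ≠ ⊤ := fun s => measure_ne_top μ s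
  constructor
  · rintro ⟨hA, hI, hEnt, hS⟩
    choose ν hν hrep using hA
    have hν1 : ∀ ω, ν ω Set.univ = 1 := fun ω => (hν ω).measure_univ
    have hνfin : ∀ ω (s : Set Ω), ν ω s ≠ ⊤ := by
      intro ω s
      haveI := hν ω
      exact measure_ne_top _ s
    have hmono : ∀ ω {A B : Set Ω}, A ⊆ B → M.t ω A ≤ M.t ω B := by
      intro ω A B hAB
      rw [hrep ω A (hmeas A), hrep ω B (hmeas B)]
      exact ENNReal.toReal_mono (hνfin ω B) (measure_mono hAB)
    have hadd : ∀ ω (E : Set Ω), M.t ω E + M.t ω Eᶜ = 1 := by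
      intro ω E
      rw [hrep ω E (hmeas E), hrep ω Eᶜ (hmeas Eᶜ),
        ← ENNReal.toReal_add (hνfin _ _) (hνfin _ _),
        measure_add_measure_compl (hmeas E), hν1]
      simp
    have hconst : ∀ ω ω', ω' ∈ M.P ω → ∀ E, M.t ω' E = M.t ω E := by
      intro ω ω' hω' E
      have h1 : M.t ω E ≤ M.t ω' E := hS ω hω' E (hmeas E)
      have h2 : M.t ω Eᶜ ≤ M.t ω' Eᶜ := hS ω hω' Eᶜ (hmeas Eᶜ)
      have a1 := hadd ω E
      have a2 := hadd ω' E
      linarith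
    have hPsub : ∀ ω, M.P ω ⊆ M.cl ω := fun ω ω' h =>
      (M.aux_mem_cl_iff hmeas ω ω').2 (hconst ω ω' h)
    have hclν : ∀ ω, ν ω (M.cl ω) = 1 := by
      intro ω
      have h1 : M.t ω (M.cl ω) = 1 :=
        le_antisymm (M.t_le_one ω _) (by rw [← hEnt ω]; exact hmono ω (hPsub ω))
      rw [hrep ω _ (hmeas _)] at h1
      exact (ENNReal.toReal_eq_one_iff _).mp h1
    have hkey : ∀ ω ω' (E : Set Ω),
        M.t ω' (E ∩ M.cl ω) = if ω' ∈ M.cl ω then M.t ω E else 0 := by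
      intro ω ω' E
      by_cases h : ω' ∈ M.cl ω
      · simp only [h, if_true]
        have hcl' : M.cl ω' = M.cl ω := M.aux_cl_eq hmeas h
        have h1 : ν ω' (M.cl ω) = 1 := by rw [← hcl']; exact hclν ω'
        have h0 : ν ω' (M.cl ω)ᶜ = 0 := (prob_compl_eq_zero_iff (hmeas _)).mpr h1
        have hE' : ν ω' (E ∩ M.cl ω) = ν ω' E := by
          have hle : ν ω' E ≤ ν ω' (E ∩ M.cl ω) + ν ω' (M.cl ω)ᶜ := by
            refine le_trans (measure_mono ?_) (measure_union_le _ _)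
            intro x hx
            by_cases hxc : x ∈ M.cl ω
            · exact Or.inl ⟨hx, hxc⟩
            · exact Or.inr hxc
          rw [h0, add_zero] at hle
          exact le_antisymm (measure_mono Set.inter_subset_left) hle
        calc M.t ω' (E ∩ M.cl ω) = (ν ω' (E ∩ M.cl ω)).toReal := hrep ω' _ (hmeas _)
          _ = (ν ω' E).toReal := by rw [hE']
          _ = M.t ω' E := (hrep ω' E (hmeas _)).symm
          _ = M.t ω E := (M.aux_mem_cl_iff hmeas ω ω').1 h E
      · simp only [h, if_false]
        have hdisj : M.cl ω ⊆ (M.cl ω')ᶜ := by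
          intro x hx hx'
          exact h ((M.aux_mem_cl_iff hmeas ω ω').2 (fun F =>
            ((M.aux_mem_cl_iff hmeas ω' x).1 hx' F).symm.trans
              ((M.aux_mem_cl_iff hmeas ω x).1 hx F)))
        have h0 : ν ω' (M.cl ω')ᶜ = 0 :=
          (prob_compl_eq_zero_iff (hmeas _)).mpr (hclν ω')
        have hz : ν ω' (E ∩ M.cl ω) = 0 :=
          measure_mono_null (Set.inter_subset_right.trans hdisj) h0
        rw [hrep ω' _ (hmeas _), hz, ENNReal.toReal_zero]
    have hclpos : ∀ ω, 0 < (μ (M.cl ω)).toReal := by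
      intro ω
      have hp : 0 < μ (M.cl ω) := lt_of_lt_of_le (M.P_pos ω) (measure_mono (hPsub ω))
      exact ENNReal.toReal_pos hp.ne' (hfin _)
    have hbayescl : ∀ ω (E : Set Ω),
        M.t ω E = (μ (E ∩ M.cl ω)).toReal / (μ (M.cl ω)).toReal := by
      intro ω E
      have h1 := hI (E ∩ M.cl ω) (hmeas _)
      have h2 : (fun ω' => M.t ω' (E ∩ M.cl ω)) = (M.cl ω).indicator (fun _ => M.t ω E) := by
        funext ω'
        rw [hkey ω ω' E]
        by_cases h : ω' ∈ M.cl ω <;> simp [h]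
      rw [h2, integral_indicator_const _ (hmeas _), smul_eq_mul] at h1
      rw [h1]
      exact (mul_div_cancel_left₀ _ (hclpos ω).ne').symm
    have hPcl : ∀ ω, M.P ω = M.cl ω := by
      intro ω
      refine Set.Subset.antisymm (hPsub ω) ?_
      have h1 : (μ (M.P ω)).toReal = (μ (M.cl ω)).toReal := by
        have hent := hEnt ω
        rw [hbayescl ω (M.P ω), Set.inter_eq_left.mpr (hPsub ω)] at hent
        exact (div_eq_one_iff_eq (hclpos ω).ne').mp hent
      have hμeq : μ (M.P ω) = μ (M.cl ω) :=
        (ENNReal.toReal_eq_toReal_iff' (hfin _) (hfin _)).mp h1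
      intro x hx
      by_contra hxP
      have hsub : {x} ∪ M.P ω ⊆ M.cl ω :=
        Set.union_subset (by simpa using hx) (hPsub ω)
      have hle := measure_mono (μ := μ) hsub
      rw [measure_union (Set.disjoint_singleton_left.mpr hxP) (M.P_meas ω), ← hμeq] at hle
      have h0 : μ {x} ≤ 0 := by
        have := (ENNReal.add_le_add_iff_right (hfin (M.P ω))).mp
          (by simpa using hle : μ {x} + μ (M.P ω) ≤ 0 + μ (M.P ω))
        exact this
      exact absurd (le_antisymm h0 zero_le) (hpos x).ne'
    refine ⟨hPcl, fun ω E => ?_⟩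
    rw [hPcl ω]
    exact hbayescl ω E
  · rintro ⟨hPcl, hB⟩
    have hPne : ∀ ω, μ (M.P ω) ≠ 0 := fun ω => (M.P_pos ω).ne'
    have hPtopos : ∀ ω, 0 < (μ (M.P ω)).toReal := fun ω =>
      ENNReal.toReal_pos (hPne ω) (hfin _)
    have hrefl : ∀ ω, ω ∈ M.P ω := by
      intro ω
      rw [hPcl ω]
      exact (M.aux_mem_cl_iff hmeas ω ω).2 (fun _ => rfl)
    have hconst : ∀ ω ω', ω' ∈ M.P ω → ∀ F, M.t ω' F = M.t ω F := by
      intro ω ω' h F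
      exact (M.aux_mem_cl_iff hmeas ω ω').1 ((hPcl ω) ▸ h) F
    have hPeq : ∀ ω ω', ω' ∈ M.P ω → M.P ω' = M.P ω := by
      intro ω ω' h
      rw [hPcl ω', hPcl ω]
      exact M.aux_cl_eq hmeas ((hPcl ω) ▸ h)
    have hsymm : ∀ ω ω', ω ∈ M.P ω' ↔ ω' ∈ M.P ω := by
      have key : ∀ ω ω', ω ∈ M.P ω' → ω' ∈ M.P ω := by
        intro ω ω' h
        rw [hPeq ω' ω h]
        exact hrefl ω'
      exact fun ω ω' => ⟨key ω ω', key ω' ω⟩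
    refine ⟨?_, ?_, ?_, ?_⟩
    · -- AdditiveTypes
      intro ω
      refine ⟨(μ (M.P ω))⁻¹ • μ.restrict (M.P ω), ?_, ?_⟩
      · constructor
        rw [Measure.smul_apply, Measure.restrict_apply_univ, smul_eq_mul,
          ENNReal.inv_mul_cancel (hPne ω) (hfin _)]
      · intro E hE
        rw [hB ω E, Measure.smul_apply, Measure.restrict_apply hE, smul_eq_mul,
          ENNReal.toReal_mul, ENNReal.toReal_inv, div_eq_mul_inv, mul_comm]
    · -- Invariance
      intro E hE
      have hnn : 0 ≤ᵐ[μ] fun ω' => M.t ω' E := ae_of_all _ (fun ω' => M.t_nonneg ω' E)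
      rw [integral_eq_lintegral_of_nonneg_ae hnn (M.t_meas E hE).aestronglyMeasurable]
      congr 1
      have hof : (fun ω' => ENNReal.ofReal (M.t ω' E))
          = fun ω' => μ (E ∩ M.P ω') / μ (M.P ω') := by
        funext ω'
        rw [hB ω' E, ← ENNReal.toReal_div, ENNReal.ofReal_toReal]
        simp only [ne_eq, ENNReal.div_eq_top, not_or, not_and_or]
        exact ⟨Or.inr (hPne ω'), Or.inl (hfin _)⟩
      rw [hof, lintegral_countable']
      have hinner : ∀ x, (∑' ω', (E ∩ M.P ω').indicator (fun y => μ {y}) x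
          * (μ (M.P ω'))⁻¹ * μ {ω'}) = E.indicator (fun y => μ {y}) x := by
        intro x
        have hterm : ∀ ω', (E ∩ M.P ω').indicator (fun y => μ {y}) x
            * (μ (M.P ω'))⁻¹ * μ {ω'}
            = (M.P x).indicator
                (fun ω'' => E.indicator (fun y => μ {y}) x * (μ (M.P x))⁻¹ * μ {ω''}) ω' := by
          intro ω'
          by_cases h : ω' ∈ M.P x
          · have hx' : x ∈ M.P ω' := (hsymm x ω').mpr h
            have hPe : M.P ω' = M.P x := hPeq x ω' h
            rw [Set.indicator_of_mem h]
            by_cases hxE : x ∈ E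
            · rw [Set.indicator_of_mem (Set.mem_inter hxE hx'), Set.indicator_of_mem hxE, hPe]
            · rw [Set.indicator_of_notMem (fun hc => hxE hc.1),
                Set.indicator_of_notMem hxE]
              simp
          · have hx' : x ∉ M.P ω' := fun hc => h ((hsymm x ω').mp hc)
            rw [Set.indicator_of_notMem h,
              Set.indicator_of_notMem (fun hc => hx' hc.2)]
            simp
        calc (∑' ω', (E ∩ M.P ω').indicator (fun y => μ {y}) x
              * (μ (M.P ω'))⁻¹ * μ {ω'})
            = ∑' ω', (M.P x).indicator
                (fun ω'' => E.indicator (fun y => μ {y}) x * (μ (M.P x))⁻¹ * μ {ω''}) ω' :=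
              tsum_congr hterm
          _ = ∑' ω', E.indicator (fun y => μ {y}) x * (μ (M.P x))⁻¹
                * (M.P x).indicator (fun y => μ {y}) ω' := by
              refine tsum_congr (fun ω' => ?_)
              by_cases h : ω' ∈ M.P x
              · rw [Set.indicator_of_mem h, Set.indicator_of_mem h]
              · rw [Set.indicator_of_notMem h, Set.indicator_of_notMem h, mul_zero]
          _ = E.indicator (fun y => μ {y}) x * (μ (M.P x))⁻¹ * μ (M.P x) := by
              rw [ENNReal.tsum_mul_left, μ.tsum_indicator_apply_singleton _ (hmeas _)]
          _ = E.indicator (fun y => μ {y}) x := by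
              rw [mul_assoc, ENNReal.inv_mul_cancel (hPne x) (hfin _), mul_one]
      calc μ E = ∑' x, E.indicator (fun y => μ {y}) x :=
            (μ.tsum_indicator_apply_singleton E hE).symm
        _ = ∑' x, ∑' ω', (E ∩ M.P ω').indicator (fun y => μ {y}) x
              * (μ (M.P ω'))⁻¹ * μ {ω'} := by
            exact tsum_congr (fun x => (hinner x).symm)
        _ = ∑' ω', ∑' x, (E ∩ M.P ω').indicator (fun y => μ {y}) x
              * (μ (M.P ω'))⁻¹ * μ {ω'} := ENNReal.tsum_comm
        _ = ∑' ω', μ (E ∩ M.P ω') / μ (M.P ω') * μ {ω'} := by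
            refine tsum_congr (fun ω' => ?_)
            rw [ENNReal.tsum_mul_right, ENNReal.tsum_mul_right,
              μ.tsum_indicator_apply_singleton _ (hmeas _), div_eq_mul_inv]
    · -- Entailment
      intro ω
      rw [hB ω (M.P ω), Set.inter_self, div_self (hPtopos ω).ne']
    · -- SelfEvidence
      intro ω
      rw [hPcl ω]
      exact Set.inter_subset_left
end

section
/- Let (Ω, Σ, μ, P, t) be a regular discrete epistemic model. Then K(E) = B^1(E) for every E ⊆ Ω, and the operator K satisfies Truth Axiom (K(E) ⊆ E for all E), Positive Introspection (K(E) ⊆ K(K(E)) for all E), and Negative Introspection (Ω ∖ K(E) ⊆ K(Ω ∖ K(E)) for all E). -/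
open MeasureTheory

/-- in a regular discrete model, `K = B^1` and `K` satisfies Truth
Axiom, Positive Introspection, and Negative Introspection. -/
theorem statement8 {Ω : Type} [MeasurableSpace Ω] {μ : MeasureTheory.Measure Ω}
    (M : EpiModel Ω μ) (hdisc : EpiModel.Discrete Ω μ) (hreg : M.Regular) :
    (∀ E : Set Ω, M.K E = M.B 1 E) ∧
    (∀ E : Set Ω, M.K E ⊆ E) ∧
    (∀ E : Set Ω, M.K E ⊆ M.K (M.K E)) ∧
    (∀ E : Set Ω, (M.K E)ᶜ ⊆ M.K ((M.K E)ᶜ)) := by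
  obtain ⟨hcount, hmeas, hposμ⟩ := hdisc
  obtain ⟨hAdd, hInv, hEnt, hSE⟩ := hreg
  haveI hprob := M.prob
  choose ν hνprob hνt using hAdd
  haveI : ∀ ω, IsProbabilityMeasure (ν ω) := hνprob
  -- complement formula
  have hcompl : ∀ ω (E : Set Ω), M.t ω Eᶜ = 1 - M.t ω E := by
    intro ω E
    have h1 : ν ω Eᶜ = 1 - ν ω E := by
      rw [measure_compl (hmeas E) (measure_ne_top _ _), measure_univ]
    rw [hνt ω Eᶜ (hmeas _), hνt ω E (hmeas _), h1,
      ENNReal.toReal_sub_of_le prob_le_one (by simp)]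
    simp
  -- types are constant on information cells
  have hconst : ∀ ω x, x ∈ M.P ω → ∀ E : Set Ω, M.t x E = M.t ω E := by
    intro ω x hx E
    have h1 := hSE ω hx E (hmeas E)
    have h2 := hSE ω hx Eᶜ (hmeas Eᶜ)
    rw [hcompl, hcompl] at h2
    linarith
  -- t ω E = 1 ↔ ν ω E = 1
  have ht1 : ∀ ω (E : Set Ω), M.t ω E = 1 ↔ ν ω E = 1 := by
    intro ω E
    rw [hνt ω E (hmeas E)]
    constructor
    · intro h
      have hne : ν ω E ≠ ⊤ := measure_ne_top _ _
      rw [← ENNReal.ofReal_toReal hne, h]; simp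
    · intro h; rw [h]; simp
  -- ν ω ((P ω)ᶜ) = 0
  have hPc : ∀ ω, ν ω (M.P ω)ᶜ = 0 := by
    intro ω
    have h1 : ν ω (M.P ω) = 1 := (ht1 ω _).mp (hEnt ω)
    rw [measure_compl (hmeas _) (measure_ne_top _ _), measure_univ, h1]
    simp
  -- positive mass on a point implies membership in the cell
  have hmem : ∀ y x, 0 < ν y {x} → x ∈ M.P y := by
    intro y x hy
    by_contra hxn
    have h1 : ν y {x} ≤ ν y (M.P y)ᶜ := measure_mono (by simpa using hxn)
    rw [hPc y] at h1
    exact absurd (le_antisymm h1 zero_le) hy.ne'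
  -- each state puts positive probability on its own singleton
  have hsing : ∀ x, 0 < M.t x {x} := by
    intro x
    rcases lt_or_eq_of_le (M.t_nonneg x {x}) with h | h
    · exact h
    exfalso
    have hx0 : M.t x {x} = 0 := h.symm
    have hall : ∀ y, M.t y {x} = 0 := by
      intro y
      by_contra hy
      have hypos : 0 < M.t y {x} := (M.t_nonneg y _).lt_of_ne (Ne.symm hy)
      have hν : 0 < ν y {x} := by
        rw [hνt y {x} (hmeas _)] at hypos
        by_contra hc
        push_neg at hc
        have : ν y {x} = 0 := le_antisymm hc zero_le
        rw [this] at hypos; simp at hypos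
      have hxPy : x ∈ M.P y := hmem y x hν
      have := hconst y x hxPy {x}
      rw [hx0] at this
      exact hy this.symm
    have hI := hInv {x} (hmeas _)
    have hz : ∫ ω, M.t ω {x} ∂μ = 0 := by
      have : (fun ω => M.t ω {x}) = fun _ => (0:ℝ) := funext hall
      rw [this, integral_zero]
    rw [hz] at hI
    have hp := hposμ x
    have := ENNReal.toReal_pos hp.ne' (measure_ne_top _ _)
    rw [hI] at this; exact lt_irrefl 0 this
  -- reflexivity
  have hrefl : ∀ ω, ω ∈ M.P ω := by
    intro ω
    have := hsing ω
    rw [hνt ω {ω} (hmeas _)] at this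
    apply hmem
    by_contra hc
    push_neg at hc
    have h0 : ν ω {ω} = 0 := le_antisymm hc zero_le
    rw [h0] at this; simp at this
  -- full support on the cell
  have hsupp : ∀ ω x, x ∈ M.P ω → 0 < ν ω {x} := by
    intro ω x hx
    have h1 : 0 < M.t ω {x} := by
      rw [← hconst ω x hx {x}]; exact hsing x
    rw [hνt ω {x} (hmeas _)] at h1
    by_contra hc
    push_neg at hc
    have h0 : ν ω {x} = 0 := le_antisymm hc zero_le
    rw [h0] at h1; simp at h1
  -- B^1 direction: t ω E = 1 → P ω ⊆ E
  have hKofOne : ∀ ω (E : Set Ω), M.t ω E = 1 → M.P ω ⊆ E := by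
    intro ω E h1 x hx
    by_contra hxE
    have hEc : ν ω Eᶜ = 0 := by
      rw [measure_compl (hmeas E) (measure_ne_top _ _), measure_univ,
        (ht1 ω E).mp h1]
      simp
    have h2 : ν ω {x} ≤ ν ω Eᶜ := measure_mono (by simpa using hxE)
    rw [hEc] at h2
    exact absurd (le_antisymm h2 zero_le) (hsupp ω x hx).ne'
  -- converse: P ω ⊆ E → t ω E = 1
  have hOneOfK : ∀ ω (E : Set Ω), M.P ω ⊆ E → M.t ω E = 1 := by
    intro ω E h
    rw [ht1 ω E]
    have h1 : ν ω (M.P ω) ≤ ν ω E := measure_mono h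
    rw [(ht1 ω _).mp (hEnt ω)] at h1
    exact le_antisymm prob_le_one h1
  -- partition property
  have hpart : ∀ ω x, x ∈ M.P ω → M.P x = M.P ω := by
    intro ω x hx
    apply Set.Subset.antisymm
    · apply hKofOne x (M.P ω)
      rw [hconst ω x hx (M.P ω)]
      exact hOneOfK ω (M.P ω) (fun _ h => h)
    · apply hKofOne ω (M.P x)
      rw [← hconst ω x hx (M.P x)]
      exact hEnt x
  refine ⟨?_, ?_, ?_, ?_⟩
  · intro E
    ext ω
    simp only [EpiModel.K, EpiModel.B, Set.mem_setOf_eq]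
    constructor
    · intro h; rw [hOneOfK ω E h]
    · intro h
      exact hKofOne ω E (le_antisymm (M.t_le_one ω E) h)
  · intro E ω hω
    exact hω (hrefl ω)
  · intro E ω hω x hx
    show M.P x ⊆ E
    rw [hpart ω x hx]
    exact hω
  · intro E ω hω x hx
    intro hc
    apply hω
    show M.P ω ⊆ E
    rw [← hpart ω x hx]
    exact hc
end

section
/- Let (Ω, Σ, μ, P, t) be a regular epistemic model in which every singleton {ω} is measurable and (↑t(ω)), (↓t(ω)) are measurable for every ω. Then the model is discrete (i.e., Ω is countable, every subset of Ω is measurable, and μ({ω}) > 0 for every ω) if and only if B^1 satisfies Truth Axiom, i.e., B^1(E) ⊆ E for every measurable E. -/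
open MeasureTheory

section Aux

variable {Ω : Type} [MeasurableSpace Ω] {μ : MeasureTheory.Measure Ω}

/-- complement additivity of types -/
lemma aux_t_add_compl (M : EpiModel Ω μ) (hadd : M.AdditiveTypes) (ω : Ω)
    {F : Set Ω} (hF : MeasurableSet F) : M.t ω F + M.t ω Fᶜ = 1 := by
  obtain ⟨ν, hν, hνt⟩ := hadd ω
  have h1 : ν F ≤ 1 := prob_le_one
  rw [hνt F hF, hνt Fᶜ hF.compl, prob_compl_eq_one_sub hF,
    ENNReal.toReal_sub_of_le h1 ENNReal.one_ne_top]
  simp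

/-- monotonicity of types -/
lemma aux_t_mono (M : EpiModel Ω μ) (hadd : M.AdditiveTypes) (ω : Ω)
    {A B : Set Ω} (hA : MeasurableSet A) (hB : MeasurableSet B) (h : A ⊆ B) :
    M.t ω A ≤ M.t ω B := by
  obtain ⟨ν, hν, hνt⟩ := hadd ω
  rw [hνt A hA, hνt B hB]
  exact ENNReal.toReal_mono (measure_ne_top ν B) (measure_mono h)

/-- types coincide on the up-set -/
lemma aux_t_eq_of_up (M : EpiModel Ω μ) (hadd : M.AdditiveTypes) {ω ω' : Ω}
    (h : ω' ∈ M.up ω) {F : Set Ω} (hF : MeasurableSet F) : M.t ω' F = M.t ω F := by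
  have h1 := h F hF
  have h2 := h Fᶜ hF.compl
  have h3 := aux_t_add_compl M hadd ω hF
  have h4 := aux_t_add_compl M hadd ω' hF
  linarith

/-- removing a null singleton from a full set keeps the type at 1 -/
lemma aux_t_diff_one (M : EpiModel Ω μ) (hadd : M.AdditiveTypes) (ω x : Ω)
    {F : Set Ω} (hF : MeasurableSet F) (hx : MeasurableSet ({x} : Set Ω))
    (h1 : M.t ω F = 1) (h0 : M.t ω {x} = 0) : M.t ω (F \ {x}) = 1 := by
  obtain ⟨ν, hν, hνt⟩ := hadd ω
  have hx0 : ν {x} = 0 := by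
    have := hνt {x} hx
    rw [h0] at this
    rcases (ENNReal.toReal_eq_zero_iff _).mp this.symm with h | h
    · exact h
    · exact absurd h (measure_ne_top ν _)
  have hd : ν (F \ {x}) = ν F := measure_diff_null hx0
  rw [hνt (F \ {x}) (hF.diff hx), hd, ← hνt F hF, h1]

/-- a self-evident event: posteriors are a.e. its indicator -/
lemma aux_ae_indicator (M : EpiModel Ω μ) (hadd : M.AdditiveTypes) (hinv : M.Invariance)
    {E : Set Ω} (hE : MeasurableSet E) (hself : ∀ ω' ∈ E, M.t ω' E = 1) :
    ∀ᵐ ω' ∂μ, M.t ω' E = E.indicator (fun _ => (1 : ℝ)) ω' := by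
  haveI := M.prob
  set g : Ω → ℝ := E.indicator (fun _ => (1 : ℝ)) with hg
  set f : Ω → ℝ := fun ω' => M.t ω' E - g ω' with hf
  have hfnn : 0 ≤ f := by
    intro x
    by_cases hx : x ∈ E
    · simp [hf, hg, Set.indicator_of_mem hx, hself x hx]
    · have := M.t_nonneg x E
      simp [hf, hg, Set.indicator_of_notMem hx]
      linarith
  have hti : MeasureTheory.Integrable (fun ω' => M.t ω' E) μ := by
    refine MeasureTheory.Integrable.mono' (MeasureTheory.integrable_const (1 : ℝ))
      (M.t_meas E hE).aestronglyMeasurable ?_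
    filter_upwards with x
    rw [Real.norm_eq_abs, abs_le]
    exact ⟨by linarith [M.t_nonneg x E], M.t_le_one x E⟩
  have hgi : MeasureTheory.Integrable g μ :=
    (MeasureTheory.integrable_const (1 : ℝ)).indicator hE
  have hfi : MeasureTheory.Integrable f μ := hti.sub hgi
  have hint : ∫ x, f x ∂μ = 0 := by
    rw [hf]
    rw [MeasureTheory.integral_sub hti hgi]
    rw [hg, MeasureTheory.integral_indicator_const (1 : ℝ) hE, ← hinv E hE]
    simp
    exact sub_self _
  have := (MeasureTheory.integral_eq_zero_iff_of_nonneg hfnn hfi).mp hint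
  filter_upwards [this] with x hx
  have : M.t x E - g x = 0 := hx
  linarith

/-- `t ω (up ω) = 1` in a regular model -/
lemma aux_t_up_one (M : EpiModel Ω μ) (hreg : M.Regular) (hup : ∀ ω, MeasurableSet (M.up ω))
    (ω : Ω) : M.t ω (M.up ω) = 1 := by
  obtain ⟨hadd, hinv, hent, hse⟩ := hreg
  have h1 : M.t ω (M.P ω) ≤ M.t ω (M.up ω) :=
    aux_t_mono M hadd ω (M.P_meas ω) (hup ω) (hse ω)
  rw [hent ω] at h1
  exact le_antisymm (M.t_le_one ω _) h1

/-- Truth axiom implies every singleton gets positive posterior weight at itself. -/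
lemma aux_t_singleton_pos (M : EpiModel Ω μ) (hreg : M.Regular)
    (hsing : ∀ ω : Ω, MeasurableSet ({ω} : Set Ω))
    (hup : ∀ ω, MeasurableSet (M.up ω))
    (htruth : ∀ E : Set Ω, MeasurableSet E → M.B 1 E ⊆ E) (ω : Ω) :
    0 < M.t ω {ω} := by
  obtain ⟨hadd, hinv, hent, hse⟩ := hreg
  rcases lt_or_eq_of_le (M.t_nonneg ω {ω}) with h | h
  · exact h
  exfalso
  have hu1 : M.t ω (M.up ω) = 1 := aux_t_up_one M ⟨hadd, hinv, hent, hse⟩ hup ω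
  have hF : M.t ω (M.up ω \ {ω}) = 1 :=
    aux_t_diff_one M hadd ω ω (hup ω) (hsing ω) hu1 h.symm
  have : ω ∈ M.up ω \ {ω} :=
    htruth _ ((hup ω).diff (hsing ω)) (le_of_eq hF.symm)
  exact this.2 rfl

end Aux

/-- Corollary 2.2: a regular model with measurable singletons is
discrete iff `B^1` satisfies Truth Axiom. -/
theorem statement9 {Ω : Type} [MeasurableSpace Ω] {μ : MeasureTheory.Measure Ω}
    (M : EpiModel Ω μ) (hreg : M.Regular)
    (hsing : ∀ ω : Ω, MeasurableSet ({ω} : Set Ω))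
    (hup : ∀ ω, MeasurableSet (M.up ω)) (hdown : ∀ ω, MeasurableSet (M.down ω)) :
    EpiModel.Discrete Ω μ ↔ ∀ E : Set Ω, MeasurableSet E → M.B 1 E ⊆ E := by
  haveI := M.prob
  obtain ⟨hadd, hinv, hent, hse⟩ := hreg
  constructor
  · rintro ⟨hcount, hmeas, hpos⟩ E hE ω hω
    -- Truth axiom from discreteness
    have ht1 : M.t ω E = 1 := le_antisymm (M.t_le_one ω E) hω
    by_contra hnE
    -- the type of ω puts zero mass on {ω}
    have hsub : E ⊆ ({ω} : Set Ω)ᶜ := fun x hx hxω => hnE (by rwa [Set.mem_singleton_iff.mp hxω] at hx)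
    have hc1 : M.t ω ({ω} : Set Ω)ᶜ = 1 := by
      have := aux_t_mono M hadd ω hE (hsing ω).compl hsub
      rw [ht1] at this
      exact le_antisymm (M.t_le_one ω _) this
    have h0 : M.t ω ({ω} : Set Ω) = 0 := by
      have := aux_t_add_compl M hadd ω (hsing ω)
      linarith
    -- the set up ω \ {ω} is self-evident and has type 1 at ω
    have hu1 : M.t ω (M.up ω) = 1 := aux_t_up_one M ⟨hadd, hinv, hent, hse⟩ hup ω
    set F : Set Ω := M.up ω \ {ω} with hFdef
    have hFm : MeasurableSet F := (hup ω).diff (hsing ω)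
    have hF1 : M.t ω F = 1 := aux_t_diff_one M hadd ω ω (hup ω) (hsing ω) hu1 h0
    have hself : ∀ ω' ∈ F, M.t ω' F = 1 := by
      intro ω' hω'
      rw [aux_t_eq_of_up M hadd hω'.1 hFm]
      exact hF1
    have hae := aux_ae_indicator M hadd hinv hFm hself
    rw [MeasureTheory.ae_iff] at hae
    have hωbad : ω ∈ {x | ¬ M.t x F = F.indicator (fun _ => (1 : ℝ)) x} := by
      simp only [Set.mem_setOf_eq]
      have hωF : ω ∉ F := fun h => h.2 rfl
      rw [hF1, Set.indicator_of_notMem hωF]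
      norm_num
    have := measure_mono (μ := μ) (Set.singleton_subset_iff.mpr hωbad)
    rw [hae] at this
    exact absurd (le_antisymm this zero_le) (ne_of_gt (hpos ω))
  · intro htruth
    -- positive prior on singletons
    have hpos : ∀ ω : Ω, 0 < μ ({ω} : Set Ω) := by
      intro ω
      have hc : 0 < M.t ω {ω} :=
        aux_t_singleton_pos M ⟨hadd, hinv, hent, hse⟩ hsing hup htruth ω
      -- integral lower bound via up ω
      have hupos : 0 < (μ (M.up ω)).toReal := by
        refine ENNReal.toReal_pos (fun h => ?_) (measure_ne_top μ _)
        have := lt_of_lt_of_le (M.P_pos ω) (measure_mono (hse ω))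
        rw [h] at this
        exact lt_irrefl _ this
      have hti : MeasureTheory.Integrable (fun x => M.t x {ω}) μ := by
        refine MeasureTheory.Integrable.mono' (MeasureTheory.integrable_const (1 : ℝ))
          (M.t_meas {ω} (hsing ω)).aestronglyMeasurable ?_
        filter_upwards with x
        rw [Real.norm_eq_abs, abs_le]
        exact ⟨by linarith [M.t_nonneg x {ω}], M.t_le_one x {ω}⟩
      have hgi : MeasureTheory.Integrable ((M.up ω).indicator fun _ => M.t ω {ω}) μ :=
        (MeasureTheory.integrable_const _).indicator (hup ω)
      have hmono : ∀ x, (M.up ω).indicator (fun _ => M.t ω {ω}) x ≤ M.t x {ω} := by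
        intro x
        by_cases hx : x ∈ M.up ω
        · rw [Set.indicator_of_mem hx, ← aux_t_eq_of_up M hadd hx (hsing ω)]
        · rw [Set.indicator_of_notMem hx]
          exact M.t_nonneg x _
      have hineq : (M.up ω).indicator (fun _ => M.t ω {ω}) ≤ fun x => M.t x {ω} := hmono
      have h1 : ∫ x, (M.up ω).indicator (fun _ => M.t ω {ω}) x ∂μ ≤ ∫ x, M.t x {ω} ∂μ :=
        MeasureTheory.integral_mono hgi hti hineq
      rw [MeasureTheory.integral_indicator_const _ (hup ω)] at h1
      have h2 : (0 : ℝ) < (μ (M.up ω)).toReal • M.t ω {ω} := by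
        rw [smul_eq_mul]; positivity
      have h3 : 0 < (μ ({ω} : Set Ω)).toReal := by
        rw [hinv {ω} (hsing ω)]
        exact lt_of_lt_of_le h2 h1
      exact (ENNReal.toReal_pos_iff.mp h3).1
    -- countability
    have hcountset : Set.Countable {ω : Ω | 0 < μ ({ω} : Set Ω)} :=
      MeasureTheory.Measure.countable_meas_pos_of_disjoint_iUnion
        (As := fun ω : Ω => ({ω} : Set Ω)) hsing
        (fun a b hab => Set.disjoint_singleton.mpr hab)
    have huniv : {ω : Ω | 0 < μ ({ω} : Set Ω)} = Set.univ := by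
      ext x; simp [hpos x]
    rw [huniv] at hcountset
    have hcount : Countable Ω := Set.countable_univ_iff.mp hcountset
    haveI := hcount
    haveI : MeasurableSingletonClass Ω := ⟨hsing⟩
    exact ⟨hcount, fun A => (Set.to_countable A).measurableSet, hpos⟩
end

section
/- Let (Ω, Σ, μ, P, t) be a regular discrete epistemic model. Then the agent is unaware of nothing: for every E ⊆ Ω, (Ω ∖ K(E)) ∩ (Ω ∖ K(Ω ∖ K(E))) = ∅. -/
open MeasureTheory

/-- Corollary 3: in a discrete regular model the agent is
unaware of nothing. -/
theorem statement10 {Ω : Type} [MeasurableSpace Ω] {μ : MeasureTheory.Measure Ω}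
    (M : EpiModel Ω μ) (hdisc : EpiModel.Discrete Ω μ) (hreg : M.Regular) :
    ∀ E : Set Ω, (M.K E)ᶜ ∩ (M.K ((M.K E)ᶜ))ᶜ = ∅ := by
  obtain ⟨hAdd, hInv, hEnt, hSE⟩ := hreg
  obtain ⟨_, hmeas, hpos⟩ := hdisc
  haveI := M.prob
  have hμfin : ∀ A : Set Ω, μ A ≠ ⊤ := fun A => measure_ne_top μ A
  -- monotonicity of types
  have tmono : ∀ ω (A B : Set Ω), A ⊆ B → M.t ω A ≤ M.t ω B := by
    intro ω A B hAB
    obtain ⟨ν, hν, hνe⟩ := hAdd ω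
    rw [hνe A (hmeas A), hνe B (hmeas B)]
    exact ENNReal.toReal_mono (measure_ne_top ν B) (measure_mono hAB)
  -- complement rule
  have tcompl : ∀ ω (A : Set Ω), M.t ω Aᶜ = 1 - M.t ω A := by
    intro ω A
    obtain ⟨ν, hν, hνe⟩ := hAdd ω
    haveI := hν
    rw [hνe A (hmeas A), hνe Aᶜ (hmeas Aᶜ)]
    have h1 : ν A + ν Aᶜ = 1 := by
      rw [measure_add_measure_compl (hmeas A), measure_univ]
    have h2 := congrArg ENNReal.toReal h1
    rw [ENNReal.toReal_add (measure_ne_top ν A) (measure_ne_top ν Aᶜ)] at h2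
    simp at h2
    linarith
  -- types are constant on P ω
  have teq : ∀ ω ω', ω' ∈ M.P ω → ∀ A : Set Ω, M.t ω' A = M.t ω A := by
    intro ω ω' h A
    have h1 := hSE ω h A (hmeas A)
    have h2 := hSE ω h Aᶜ (hmeas Aᶜ)
    rw [tcompl, tcompl] at h2
    linarith
  have t_self : ∀ ω ω', ω' ∈ M.P ω → M.t ω' (M.P ω) = 1 := by
    intro ω ω' h
    rw [teq ω ω' h]
    exact hEnt ω
  -- integrability of bounded measurable functions
  have hint : ∀ f : Ω → ℝ, Measurable f → (∀ y, 0 ≤ f y) → (∀ y, f y ≤ 1) →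
      MeasureTheory.Integrable f μ := by
    intro f hm h0 h1
    refine (MeasureTheory.integrable_const (1 : ℝ)).mono' hm.aestronglyMeasurable ?_
    filter_upwards with y
    rw [Real.norm_eq_abs, abs_of_nonneg (h0 y)]
    exact h1 y
  -- a.e. zero implies everywhere zero (full support)
  have haev : ∀ f : Ω → ℝ, f =ᵐ[μ] 0 → ∀ y, f y = 0 := by
    intro f hf y
    by_contra hy
    have h0 : μ {x | ¬ f x = (0 : Ω → ℝ) x} = 0 := MeasureTheory.ae_iff.mp hf
    have hsub : {y} ⊆ {x | ¬ f x = (0 : Ω → ℝ) x} := by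
      intro z hz
      rcases hz with rfl
      simpa using hy
    have : μ {y} = 0 := le_antisymm (le_trans (measure_mono hsub) h0.le) zero_le
    exact absurd this (hpos y).ne'
  intro E
  rw [Set.eq_empty_iff_forall_notMem]
  rintro ω ⟨hω1, hω2⟩
  have hω1' : ¬ M.P ω ⊆ E := hω1
  have hω2' : ¬ M.P ω ⊆ (M.K E)ᶜ := hω2
  obtain ⟨x, hxP, hxE⟩ : ∃ x, x ∈ M.P ω ∧ x ∉ E := by
    by_contra h
    push_neg at h
    exact hω1' h
  obtain ⟨ω', hω'P, hω'K⟩ : ∃ ω', ω' ∈ M.P ω ∧ M.P ω' ⊆ E := by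
    by_contra h
    push_neg at h
    exact hω2' fun y hy hyK => (h y hy) hyK
  -- Lemma A: t y (P ω) = 0 for y ∉ P ω
  have hS := hmeas (M.P ω)
  have lemA : ∀ y, y ∉ M.P ω → M.t y (M.P ω) = 0 := by
    have hind_int : MeasureTheory.Integrable ((M.P ω).indicator fun _ => (1 : ℝ)) μ :=
      (MeasureTheory.integrable_const 1).indicator hS
    have ht_int : MeasureTheory.Integrable (fun y => M.t y (M.P ω)) μ :=
      hint _ (M.t_meas _ hS) (fun y => M.t_nonneg y _) (fun y => M.t_le_one y _)
    have hnonneg : (0 : Ω → ℝ) ≤ fun y => M.t y (M.P ω) - (M.P ω).indicator (fun _ => (1 : ℝ)) y := by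
      intro y
      by_cases hy : y ∈ M.P ω
      · have := t_self ω y hy
        simp [Set.indicator_of_mem hy, this]
      · simp [Set.indicator_of_notMem hy]
        exact M.t_nonneg y _
    have hzero : ∫ y, (M.t y (M.P ω) - (M.P ω).indicator (fun _ => (1 : ℝ)) y) ∂μ = 0 := by
      rw [MeasureTheory.integral_sub ht_int hind_int,
        MeasureTheory.integral_indicator_const _ hS, ← hInv _ hS]
      simp [Measure.real]
    have hae := (MeasureTheory.integral_eq_zero_iff_of_nonneg hnonneg
      (ht_int.sub hind_int)).mp hzero
    intro y hy
    have := haev _ hae y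
    simp [Set.indicator_of_notMem hy] at this
    exact this
  -- Lemma B: t ω {x} > 0
  have lemB : 0 < M.t ω {x} := by
    have hx := hmeas ({x} : Set Ω)
    have key : (fun y => M.t y {x}) = (M.P ω).indicator (fun _ => M.t ω {x}) := by
      funext y
      by_cases hy : y ∈ M.P ω
      · rw [Set.indicator_of_mem hy]
        exact teq ω y hy {x}
      · rw [Set.indicator_of_notMem hy]
        have h0 := lemA y hy
        have h1 := tmono y {x} (M.P ω) (Set.singleton_subset_iff.mpr hxP)
        have h2 := M.t_nonneg y {x}
        linarith
    have heq : (μ {x}).toReal = (μ (M.P ω)).toReal * M.t ω {x} := by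
      rw [hInv _ hx]
      calc ∫ y, M.t y {x} ∂μ = ∫ y, (M.P ω).indicator (fun _ => M.t ω {x}) y ∂μ := by
              rw [key]
        _ = (μ (M.P ω)).toReal • M.t ω {x} := MeasureTheory.integral_indicator_const _ hS
        _ = (μ (M.P ω)).toReal * M.t ω {x} := smul_eq_mul _ _
    have hxpos : 0 < (μ {x}).toReal := ENNReal.toReal_pos (hpos x).ne' (hμfin _)
    by_contra h
    push_neg at h
    have hc : (0 : ℝ) ≤ (μ (M.P ω)).toReal := ENNReal.toReal_nonneg
    nlinarith
  -- conclusion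
  have h1 : M.t ω E = 1 := by
    refine le_antisymm (M.t_le_one ω E) ?_
    calc (1 : ℝ) = M.t ω' (M.P ω') := (hEnt ω').symm
      _ = M.t ω (M.P ω') := teq ω ω' hω'P _
      _ ≤ M.t ω E := tmono ω _ _ hω'K
  have h2 : M.t ω Eᶜ = 0 := by rw [tcompl]; linarith
  have h3 : M.t ω {x} ≤ M.t ω Eᶜ := tmono ω _ _ (Set.singleton_subset_iff.mpr hxE)
  linarith
end

section
/- Let ((Ω, Σ, μ), (P_i, t_i)_{i∈I}) be a regular discrete interactive epistemic model for a nonempty countable set I of agents. Then common qualitative belief and common 1-belief coincide: C(E) = C^1(E) for every E ⊆ Ω. Moreover, the operator C satisfies Truth Axiom (C(E) ⊆ E), Positive Introspection (C(E) ⊆ C(C(E))), and Negative Introspection (Ω ∖ C(E) ⊆ C(Ω ∖ C(E))) for every E ⊆ Ω. -/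
open MeasureTheory

section Interactive

variable {Ω : Type} [MeasurableSpace Ω] {μ : MeasureTheory.Measure Ω} {I : Type}

/-- Mutual `p`-belief operator `F^p`. -/
def Finter (M : I → EpiModel Ω μ) (p : ℝ) (E : Set Ω) : Set Ω := ⋂ i, (M i).B p E

/-- (Iterative) common `p`-belief operator `C^p`. -/
def Cp (M : I → EpiModel Ω μ) (p : ℝ) (E : Set Ω) : Set Ω :=
  ⋂ n : ℕ, (Finter M p)^[n + 1] E

/-- Mutual qualitative belief operator `G`. -/
def G (M : I → EpiModel Ω μ) (E : Set Ω) : Set Ω := ⋂ i, (M i).K E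

/-- (Iterative) common qualitative belief operator `C`. -/
def Cqual (M : I → EpiModel Ω μ) (E : Set Ω) : Set Ω := ⋂ n : ℕ, (G M)^[n + 1] E

end Interactive

section Aux

open EpiModel MeasureTheory Set

variable {Ω : Type} [MeasurableSpace Ω] {μ : MeasureTheory.Measure Ω}

/-- t is monotone in the event, given additive types. -/
lemma t_mono_aux (M : EpiModel Ω μ) (hadd : M.AdditiveTypes) {A B : Set Ω}
    (hA : MeasurableSet A) (hB : MeasurableSet B) (hAB : A ⊆ B) (ω : Ω) :
    M.t ω A ≤ M.t ω B := by
  obtain ⟨ν, hν, hνt⟩ := hadd ω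
  rw [hνt A hA, hνt B hB]
  exact ENNReal.toReal_mono (measure_ne_top ν B) (measure_mono hAB)

lemma t_eq_one_of_subset (M : EpiModel Ω μ) (hadd : M.AdditiveTypes) {A B : Set Ω}
    (hA : MeasurableSet A) (hB : MeasurableSet B) (hAB : A ⊆ B) (hA1 : M.t ω A = 1) :
    M.t ω B = 1 :=
  le_antisymm (M.t_le_one ω B) (hA1 ▸ t_mono_aux M hadd hA hB hAB ω)

/-- Truth for 1-belief in discrete regular models. -/
lemma B1_subset (M : EpiModel Ω μ) (hdisc : EpiModel.Discrete Ω μ) (hreg : M.Regular)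
    (E : Set Ω) : M.B 1 E ⊆ E := by
  obtain ⟨hadd, hinv, hent, hse⟩ := hreg
  obtain ⟨hcount, hmeas, hpos⟩ := hdisc
  haveI : IsProbabilityMeasure μ := M.prob
  set F : Set Ω := M.B 1 E with hFdef
  set D : Set Ω := F \ E with hDdef
  -- membership in F means t ω E = 1
  have hmem : ∀ ω, ω ∈ F ↔ M.t ω E = 1 := by
    intro ω
    constructor
    · intro h; exact le_antisymm (M.t_le_one ω E) h
    · intro h; exact h.ge
  -- P ω ⊆ F for ω ∈ F
  have hPF : ∀ ω ∈ F, M.P ω ⊆ F := by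
    intro ω hω ω' hω'
    exact le_trans hω (hse ω hω' E (hmeas E))
  -- t ω F = 1 for ω ∈ F
  have htF : ∀ ω ∈ F, M.t ω F = 1 := by
    intro ω hω
    exact t_eq_one_of_subset M hadd (hmeas _) (hmeas _) (hPF ω hω) (hent ω)
  -- t ω D = 0 for ω ∈ F
  have htD : ∀ ω ∈ F, M.t ω D = 0 := by
    intro ω hω
    obtain ⟨ν, hν, hνt⟩ := hadd ω
    haveI := hν
    have hνE : ν E = 1 := by
      have h1 : (ν E).toReal = 1 := by rw [← hνt E (hmeas E)]; exact (hmem ω).1 hω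
      exact (ENNReal.toReal_eq_one_iff _).1 h1
    have hcompl : ν Eᶜ = 0 := by
      have := measure_compl (μ := ν) (hmeas E) (measure_ne_top ν E)
      rw [hνE, measure_univ] at this
      simp [this]
    have : ν D = 0 := measure_mono_null (fun x hx => hx.2) hcompl
    rw [hνt D (hmeas D), this]; simp
  -- t ω D ≤ t ω F always
  have hDF : ∀ ω, M.t ω D ≤ M.t ω F :=
    fun ω => t_mono_aux M hadd (hmeas _) (hmeas _) (fun x hx => hx.1) ω
  -- integrability
  have hintF : Integrable (fun ω => M.t ω F) μ := by
    refine ⟨(M.t_meas F (hmeas F)).aestronglyMeasurable, ?_⟩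
    apply HasFiniteIntegral.of_bounded (C := 1)
    filter_upwards with ω
    rw [Real.norm_eq_abs, abs_of_nonneg (M.t_nonneg ω F)]
    exact M.t_le_one ω F
  have hintD : Integrable (fun ω => M.t ω D) μ := by
    refine ⟨(M.t_meas D (hmeas D)).aestronglyMeasurable, ?_⟩
    apply HasFiniteIntegral.of_bounded (C := 1)
    filter_upwards with ω
    rw [Real.norm_eq_abs, abs_of_nonneg (M.t_nonneg ω D)]
    exact M.t_le_one ω D
  have hind : Integrable (F.indicator fun _ => (1 : ℝ)) μ :=
    (integrable_const (1 : ℝ)).indicator (hmeas F)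
  -- pointwise inequality
  have hpt : ∀ ω, F.indicator (fun _ => (1 : ℝ)) ω ≤ M.t ω F - M.t ω D := by
    intro ω
    by_cases hω : ω ∈ F
    · rw [Set.indicator_of_mem hω, htF ω hω, htD ω hω]; norm_num
    · rw [Set.indicator_of_notMem hω]
      linarith [hDF ω]
  -- integrate
  have hint : (μ F).toReal ≤ (μ F).toReal - (μ D).toReal := by
    have h1 : ∫ ω, F.indicator (fun _ => (1 : ℝ)) ω ∂μ ≤ ∫ ω, (M.t ω F - M.t ω D) ∂μ :=
      integral_mono hind (hintF.sub hintD) hpt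
    rw [integral_indicator_const (1 : ℝ) (hmeas F), integral_sub hintF hintD,
      ← hinv F (hmeas F), ← hinv D (hmeas D)] at h1
    simpa [Measure.real] using h1
  have hD0 : μ D = 0 := by
    have h2 : (μ D).toReal ≤ 0 := by linarith
    have h3 : (μ D).toReal = 0 := le_antisymm h2 ENNReal.toReal_nonneg
    have h4 : μ D ≠ ⊤ := measure_ne_top μ D
    exact (ENNReal.toReal_eq_zero_iff _).1 h3 |>.resolve_right h4
  -- full support ⇒ D = ∅
  intro ω hω
  by_contra hωE
  have : μ {ω} ≤ μ D := measure_mono (by intro x hx; simp at hx; subst hx; exact ⟨hω, hωE⟩)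
  rw [hD0] at this
  exact absurd (le_antisymm this zero_le) (hpos ω).ne'

/-- In discrete regular models, K = B^1. -/
lemma K_eq_B1 (M : EpiModel Ω μ) (hdisc : EpiModel.Discrete Ω μ) (hreg : M.Regular) :
    ∀ E : Set Ω, M.K E = M.B 1 E := by
  intro E
  obtain ⟨hadd, hinv, hent, hse⟩ := hreg
  obtain ⟨hcount, hmeas, hpos⟩ := hdisc
  apply Set.Subset.antisymm
  · intro ω hω
    have : M.t ω E = 1 :=
      t_eq_one_of_subset M hadd (M.P_meas ω) (hmeas E) hω (hent ω)
    exact this.ge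
  · intro ω hω ω' hω'
    have h1 : M.t ω' E = 1 :=
      le_antisymm (M.t_le_one ω' E) (le_trans hω (hse ω hω' E (hmeas E)))
    exact B1_subset M ⟨hcount, hmeas, hpos⟩ ⟨hadd, hinv, hent, hse⟩ E h1.ge

/-- Discrete regular models are partitional. -/
lemma partitional_of_regular (M : EpiModel Ω μ) (hdisc : EpiModel.Discrete Ω μ)
    (hreg : M.Regular) : M.Partitional := by
  have hKB := K_eq_B1 M hdisc hreg
  have hK_iff : ∀ ω S, M.P ω ⊆ S ↔ 1 ≤ M.t ω S := by
    intro ω S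
    constructor
    · intro h
      have h2 : ω ∈ M.K S := h
      rw [hKB] at h2; exact h2
    · intro h
      have h2 : ω ∈ M.B 1 S := h
      rw [← hKB] at h2; exact h2
  obtain ⟨hadd, hinv, hent, hse⟩ := hreg
  obtain ⟨hcount, hmeas, hpos⟩ := hdisc
  constructor
  · intro ω
    exact B1_subset M ⟨hcount, hmeas, hpos⟩ ⟨hadd, hinv, hent, hse⟩ (M.P ω) (hent ω).ge
  · intro ω ω' hω'
    -- t ω' = t ω on all sets
    have hle : ∀ S : Set Ω, M.t ω S ≤ M.t ω' S := fun S => hse ω hω' S (hmeas S)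
    have heq : ∀ S : Set Ω, M.t ω' S = M.t ω S := by
      intro S
      obtain ⟨ν, hν, hνt⟩ := hadd ω
      obtain ⟨ν', hν', hνt'⟩ := hadd ω'
      haveI := hν; haveI := hν'
      have hc : M.t ω S + M.t ω Sᶜ = 1 := by
        rw [hνt S (hmeas S), hνt Sᶜ (hmeas Sᶜ), ← ENNReal.toReal_add (measure_ne_top ν _)
          (measure_ne_top ν _), measure_add_measure_compl (hmeas S), measure_univ]
        simp
      have hc' : M.t ω' S + M.t ω' Sᶜ = 1 := by
        rw [hνt' S (hmeas S), hνt' Sᶜ (hmeas Sᶜ), ← ENNReal.toReal_add (measure_ne_top ν' _)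
          (measure_ne_top ν' _), measure_add_measure_compl (hmeas S), measure_univ]
        simp
      have := hle S
      have := hle Sᶜ
      linarith
    ext x
    constructor
    · intro hx
      have h2 : 1 ≤ M.t ω (M.P ω) := (hK_iff ω _).1 (Set.Subset.refl _)
      have h3 : 1 ≤ M.t ω' (M.P ω) := by rw [heq]; exact h2
      exact (hK_iff ω' _).2 h3 hx
    · intro hx
      have h2 : 1 ≤ M.t ω' (M.P ω') := (hK_iff ω' _).1 (Set.Subset.refl _)
      have h3 : 1 ≤ M.t ω (M.P ω') := by rw [← heq]; exact h2
      exact (hK_iff ω _).2 h3 hx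

end Aux

section Main2

open EpiModel Set

variable {Ω : Type} [MeasurableSpace Ω] {μ : MeasureTheory.Measure Ω} {I : Type}

lemma K_mono (M : EpiModel Ω μ) {A B : Set Ω} (h : A ⊆ B) : M.K A ⊆ M.K B :=
  fun _ hω => Set.Subset.trans hω h

lemma G_mono (M : I → EpiModel Ω μ) {A B : Set Ω} (h : A ⊆ B) : G M A ⊆ G M B := by
  intro ω hω
  exact Set.mem_iInter.2 fun i => K_mono (M i) h (Set.mem_iInter.1 hω i)

lemma G_iter_mono (M : I → EpiModel Ω μ) (n : ℕ) {A B : Set Ω} (h : A ⊆ B) :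
    (G M)^[n] A ⊆ (G M)^[n] B := by
  induction n generalizing A B with
  | zero => simpa
  | succ n ih =>
    rw [Function.iterate_succ_apply, Function.iterate_succ_apply]
    exact ih (G_mono M h)

/-- If `A` is self-evident for `G`, then `A` is commonly believed at `A`. -/
lemma subset_Cqual_of_subset_G (M : I → EpiModel Ω μ) {A : Set Ω} (h : A ⊆ G M A) :
    A ⊆ Cqual M A := by
  have hiter : ∀ n, A ⊆ (G M)^[n] A := by
    intro n
    induction n with
    | zero => simp
    | succ n ih =>
      calc A ⊆ (G M)^[n] A := ih
        _ ⊆ (G M)^[n] (G M A) := G_iter_mono M n h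
        _ = (G M)^[n + 1] A := (Function.iterate_succ_apply (G M) n A).symm
  intro ω hω
  exact Set.mem_iInter.2 fun n => hiter (n + 1) hω

end Main2

/-- Corollary 4: in a discrete regular interactive model,
common qualitative belief and common 1-belief coincide and reduce to common
knowledge. -/
theorem statement11 {Ω : Type} [MeasurableSpace Ω] {μ : MeasureTheory.Measure Ω}
    {I : Type} [Countable I] [Nonempty I]
    (M : I → EpiModel Ω μ) (hdisc : EpiModel.Discrete Ω μ)
    (hreg : ∀ i, (M i).Regular) :
    (∀ E : Set Ω, Cqual M E = Cp M 1 E) ∧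
    (∀ E : Set Ω, Cqual M E ⊆ E) ∧
    (∀ E : Set Ω, Cqual M E ⊆ Cqual M (Cqual M E)) ∧
    (∀ E : Set Ω, (Cqual M E)ᶜ ⊆ Cqual M ((Cqual M E)ᶜ)) := by
  have hKB : ∀ i (E : Set Ω), (M i).K E = (M i).B 1 E := fun i => K_eq_B1 (M i) hdisc (hreg i)
  have hpart : ∀ i, (M i).Partitional := fun i => partitional_of_regular (M i) hdisc (hreg i)
  have htruth : ∀ E : Set Ω, G M E ⊆ E := by
    intro E ω hω
    obtain ⟨i⟩ := (inferInstance : Nonempty I)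
    have h1 : ω ∈ (M i).K E := Set.mem_iInter.1 hω i
    rw [hKB i] at h1
    exact B1_subset (M i) hdisc (hreg i) E h1
  refine ⟨?_, ?_, ?_, ?_⟩
  · -- C = C^1
    intro E
    have hGF : G M = Finter M 1 := by
      funext A
      exact Set.iInter_congr fun i => hKB i A
    unfold Cqual Cp
    rw [hGF]
  · -- Truth
    intro E ω hω
    have h1 : ω ∈ (G M)^[0 + 1] E := Set.mem_iInter.1 hω 0
    simpa using htruth E (by simpa using h1)
  · -- Positive introspection
    intro E
    have hfix : Cqual M E ⊆ G M (Cqual M E) := by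
      intro ω hω
      refine Set.mem_iInter.2 fun i => ?_
      intro ω' hω'
      refine Set.mem_iInter.2 fun n => ?_
      have h1 : ω ∈ (G M)^[n + 2] E := Set.mem_iInter.1 hω (n + 1)
      rw [Function.iterate_succ_apply'] at h1
      exact Set.mem_iInter.1 h1 i hω'
    exact subset_Cqual_of_subset_G M hfix
  · -- Negative introspection
    intro E
    have hfix : (Cqual M E)ᶜ ⊆ G M ((Cqual M E)ᶜ) := by
      intro ω hω
      refine Set.mem_iInter.2 fun j => ?_
      intro ω'' hω''
      rw [Set.mem_compl_iff]
      intro hc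
      apply hω
      refine Set.mem_iInter.2 fun n => ?_
      have h1 : ω'' ∈ (G M)^[n + 2] E := Set.mem_iInter.1 hc (n + 1)
      rw [Function.iterate_succ_apply'] at h1
      have h2 : (M j).P ω'' ⊆ (G M)^[n + 1] E := Set.mem_iInter.1 h1 j
      have hPeq := (hpart j).2 ω ω'' hω''
      exact h2 (hPeq ▸ (hpart j).1 ω)
    exact subset_Cqual_of_subset_G M hfix
end

section
/- Let ((Ω, Σ, μ), (P_i, t_i)_{i∈I}) be a regular interactive epistemic model for a nonempty countable set I of agents, let E be measurable, let p ∈ [0,1], and let (r_i)_{i∈I} be numbers in [0,1]. If C^p(⋂_{i∈I} {ω ∈ Ω : t_i(ω,E) = r_i}) ≠ ∅, then |r_i − r_j| ≤ 1 − p for all i, j ∈ I. In particular, if C(⋂_{i∈I} {ω ∈ Ω : t_i(ω,E) = r_i}) ≠ ∅, then r_i = r_j for all i, j ∈ I. -/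
open MeasureTheory

section AgreeHelpers

variable {Ω : Type} [MeasurableSpace Ω] {μ : MeasureTheory.Measure Ω}

lemma t_mono' (M : EpiModel Ω μ) (hM : M.Regular) {S T : Set Ω}
    (hS : MeasurableSet S) (hT : MeasurableSet T) (hST : S ⊆ T) (ω : Ω) :
    M.t ω S ≤ M.t ω T := by
  obtain ⟨ν, hν, h⟩ := hM.1 ω
  haveI := hν
  rw [h S hS, h T hT]
  exact ENNReal.toReal_mono (measure_ne_top ν T) (measure_mono hST)

lemma t_compl' (M : EpiModel Ω μ) (hM : M.Regular) {S : Set Ω}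
    (hS : MeasurableSet S) (ω : Ω) : M.t ω Sᶜ = 1 - M.t ω S := by
  obtain ⟨ν, hν, h⟩ := hM.1 ω
  haveI := hν
  rw [h Sᶜ hS.compl, h S hS, prob_compl_eq_one_sub hS,
    ENNReal.toReal_sub_of_le prob_le_one ENNReal.one_ne_top, ENNReal.toReal_one]

lemma t_add' (M : EpiModel Ω μ) (hM : M.Regular) {S T : Set Ω}
    (hS : MeasurableSet S) (hT : MeasurableSet T) (ω : Ω) :
    M.t ω (S ∩ T) + M.t ω (Sᶜ ∩ T) = M.t ω T := by
  obtain ⟨ν, hν, h⟩ := hM.1 ω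
  haveI := hν
  rw [h _ (hS.inter hT), h _ (hS.compl.inter hT), h _ hT]
  have e : ν (S ∩ T) + ν (Sᶜ ∩ T) = ν T := by
    rw [Set.inter_comm S T, Set.inter_comm Sᶜ T, ← Set.diff_eq]
    exact measure_inter_add_diff T hS
  rw [← e, ENNReal.toReal_add (measure_ne_top _ _) (measure_ne_top _ _)]

lemma t_const_on_cell (M : EpiModel Ω μ) (hM : M.Regular) {ω ω' : Ω}
    (hω' : ω' ∈ M.P ω) {S : Set Ω} (hS : MeasurableSet S) :
    M.t ω' S = M.t ω S := by
  have h1 := hM.2.2.2 ω hω' S hS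
  have h2 := hM.2.2.2 ω hω' Sᶜ hS.compl
  rw [t_compl' M hM hS, t_compl' M hM hS] at h2
  linarith

lemma t_detect (M : EpiModel Ω μ) (hM : M.Regular) {S : Set Ω}
    (hS : MeasurableSet S) {ω : Ω} (hpos : 0 < M.t ω S) :
    (S ∩ M.P ω).Nonempty := by
  by_contra hc
  rw [Set.not_nonempty_iff_eq_empty] at hc
  have hsub : S ⊆ (M.P ω)ᶜ := by
    intro x hx
    intro hxP
    exact Set.eq_empty_iff_forall_notMem.mp hc x ⟨hx, hxP⟩
  have := t_mono' M hM hS (M.P_meas ω).compl hsub ω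
  rw [t_compl' M hM (M.P_meas ω), hM.2.2.1 ω] at this
  linarith

lemma t_one_of_superset (M : EpiModel Ω μ) (hM : M.Regular) {S : Set Ω}
    (hS : MeasurableSet S) {ω : Ω} (hsub : M.P ω ⊆ S) : M.t ω S = 1 := by
  have h := t_mono' M hM (M.P_meas ω) hS hsub ω
  rw [hM.2.2.1 ω] at h
  exact le_antisymm (M.t_le_one ω S) h

lemma B_meas (M : EpiModel Ω μ) {S : Set Ω} (hS : MeasurableSet S) (q : ℝ) :
    MeasurableSet (M.B q S) :=
  measurableSet_le measurable_const (M.t_meas S hS)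

variable {I : Type}

lemma Finter_meas (M : I → EpiModel Ω μ) [Countable I] {S : Set Ω}
    (hS : MeasurableSet S) (q : ℝ) : MeasurableSet (Finter M q S) :=
  MeasurableSet.iInter fun i => B_meas (M i) hS q

lemma Finter_mono (M : I → EpiModel Ω μ) (hreg : ∀ i, (M i).Regular) {S T : Set Ω}
    (hS : MeasurableSet S) (hT : MeasurableSet T) (hST : S ⊆ T) {q : ℝ} :
    Finter M q S ⊆ Finter M q T := by
  intro ω hω
  simp only [Finter, Set.mem_iInter, EpiModel.B, Set.mem_setOf_eq] at hω ⊢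
  intro i
  exact le_trans (hω i) (t_mono' (M i) (hreg i) hS hT hST ω)

lemma Finter_key (M : I → EpiModel Ω μ) [Countable I] (hreg : ∀ i, (M i).Regular)
    {S : Set Ω} (hS : MeasurableSet S) {q : ℝ} (hq0 : 0 < q) :
    Finter M q (Finter M q S) ⊆ Finter M q S := by
  intro ω hω
  simp only [Finter, Set.mem_iInter, EpiModel.B, Set.mem_setOf_eq] at hω ⊢
  intro i
  have h1 : q ≤ (M i).t ω ((M i).B q S) :=
    le_trans (hω i) (t_mono' (M i) (hreg i) (Finter_meas M hS q) (B_meas (M i) hS q)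
      (Set.iInter_subset _ i) ω)
  obtain ⟨ω', hω'B, hω'P⟩ := t_detect (M i) (hreg i) (B_meas (M i) hS q) (lt_of_lt_of_le hq0 h1)
  have := t_const_on_cell (M i) (hreg i) hω'P hS
  exact le_of_le_of_eq hω'B this

end AgreeHelpers

section Master

variable {Ω : Type} [MeasurableSpace Ω] {μ : MeasureTheory.Measure Ω} {I : Type}

lemma agree_master [Countable I] [Nonempty I] (M : I → EpiModel Ω μ)
    (hreg : ∀ i, (M i).Regular) (E : Set Ω) (hE : MeasurableSet E)
    {q : ℝ} (hq0 : 0 < q) (hq1 : q ≤ 1)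
    (r : I → ℝ) (hr : ∀ i, r i ∈ Set.Icc (0 : ℝ) 1)
    (hne : (Cp M q (⋂ i, {ω : Ω | (M i).t ω E = r i})).Nonempty) :
    ∀ i j, r i - r j ≤ 1 - q := by
  haveI : IsProbabilityMeasure μ := (M (Classical.arbitrary I)).prob
  set A : Set Ω := ⋂ i, {ω : Ω | (M i).t ω E = r i} with hAdef
  have hA : MeasurableSet A :=
    MeasurableSet.iInter fun i => measurableSet_eq_fun ((M i).t_meas E hE) measurable_const
  set Gs : ℕ → Set Ω := fun n => (Finter M q)^[n + 1] A with hGdef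
  have hG0 : Gs 0 = Finter M q A := by simp [hGdef]
  have hGsucc : ∀ n, Gs (n + 1) = Finter M q (Gs n) := by
    intro n
    simp only [hGdef]
    rw [Function.iterate_succ_apply']
  have hGmeas : ∀ n, MeasurableSet (Gs n) := by
    intro n
    induction n with
    | zero => rw [hG0]; exact Finter_meas M hA q
    | succ n ih => rw [hGsucc]; exact Finter_meas M ih q
  have hGdec : ∀ n, Gs (n + 1) ⊆ Gs n := by
    intro n
    induction n with
    | zero =>
      rw [hGsucc, hG0]
      exact Finter_key M hreg hA hq0
    | succ n ih =>
      rw [hGsucc (n+1)]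
      conv_rhs => rw [hGsucc n]
      exact Finter_mono M hreg (hGmeas (n+1)) (hGmeas n) ih
  set F : Set Ω := ⋂ n, Gs n with hFdef
  have hFeq : Cp M q A = F := rfl
  have hFmeas : MeasurableSet F := MeasurableSet.iInter hGmeas
  have hFsub : ∀ n, F ⊆ Gs n := fun n => Set.iInter_subset Gs n
  -- q-evidence of F
  have hFq : ∀ i ω, ω ∈ F → q ≤ (M i).t ω F := by
    intro i ω hω
    obtain ⟨ν, hν, hνt⟩ := (hreg i).1 ω
    haveI := hν
    rw [hνt F hFmeas]
    have hn : ∀ n, ENNReal.ofReal q ≤ ν (Gs n) := by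
      intro n
      have h1 : ω ∈ Finter M q (Gs n) := by rw [← hGsucc n]; exact hFsub (n+1) hω
      simp only [Finter, Set.mem_iInter, EpiModel.B, Set.mem_setOf_eq] at h1
      have h2 := h1 i
      rw [hνt _ (hGmeas n)] at h2
      exact ENNReal.ofReal_le_of_le_toReal h2
    have htend := MeasureTheory.tendsto_measure_iInter_atTop (μ := ν)
      (fun n => (hGmeas n).nullMeasurableSet) (antitone_nat_of_succ_le hGdec)
      ⟨0, measure_ne_top ν _⟩
    have hle : ENNReal.ofReal q ≤ ν F := ge_of_tendsto' htend hn
    calc q = (ENNReal.ofReal q).toReal := (ENNReal.toReal_ofReal hq0.le).symm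
      _ ≤ (ν F).toReal := ENNReal.toReal_mono (measure_ne_top ν F) hle
  have hFr : ∀ i ω, ω ∈ F → (M i).t ω E = r i := by
    intro i ω hω
    have h1 : ω ∈ Finter M q A := by rw [← hG0]; exact hFsub 0 hω
    simp only [Finter, Set.mem_iInter, EpiModel.B, Set.mem_setOf_eq] at h1
    obtain ⟨ω', hω'A, hω'P⟩ := t_detect (M i) (hreg i) hA (lt_of_lt_of_le hq0 (h1 i))
    have hc := t_const_on_cell (M i) (hreg i) hω'P hE
    rw [hAdef, Set.mem_iInter] at hω'A
    rw [← hc]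
    exact hω'A i
  -- the events D i
  set D : I → Set Ω := fun i => (M i).B q F with hDdef
  have hDmeas : ∀ i, MeasurableSet (D i) := fun i => B_meas (M i) hFmeas q
  have hFD : ∀ i, F ⊆ D i := fun i ω hω => hFq i ω hω
  have hDq : ∀ i ω, ω ∈ D i → q ≤ (M i).t ω F := fun i ω hω => hω
  have hDsat : ∀ i ω ω', ω' ∈ (M i).P ω → (ω ∈ D i ↔ ω' ∈ D i) := by
    intro i ω ω' hω'
    have := t_const_on_cell (M i) (hreg i) hω' hFmeas
    simp only [hDdef, EpiModel.B, Set.mem_setOf_eq, this]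
  have hDF0 : ∀ i ω, ω ∉ D i → (M i).t ω F = 0 := by
    intro i ω hω
    have hz : (M i).t ω (D i) = 0 := by
      by_contra hc
      have hpos : 0 < (M i).t ω (D i) :=
        lt_of_le_of_ne ((M i).t_nonneg ω (D i)) (Ne.symm hc)
      obtain ⟨ω', hω'D, hω'P⟩ := t_detect (M i) (hreg i) (hDmeas i) hpos
      exact hω ((hDsat i ω ω' hω'P).mpr hω'D)
    have := t_mono' (M i) (hreg i) hFmeas (hDmeas i) (hFD i) ω
    rw [hz] at this
    exact le_antisymm this ((M i).t_nonneg ω F)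
  have hDr : ∀ i ω, ω ∈ D i → (M i).t ω E = r i := by
    intro i ω hω
    obtain ⟨ω', hω'F, hω'P⟩ := t_detect (M i) (hreg i) hFmeas
      (lt_of_lt_of_le hq0 (hDq i ω hω))
    rw [← t_const_on_cell (M i) (hreg i) hω'P hE]
    exact hFr i ω' hω'F
  -- real numbers
  set f : ℝ := (μ F).toReal with hf
  set x : ℝ := (μ (E ∩ F)).toReal with hx
  set d : I → ℝ := fun i => (μ (D i)).toReal with hd
  have hdnn : ∀ i, 0 ≤ d i := fun i => ENNReal.toReal_nonneg
  -- integrability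
  have hint : ∀ i (S : Set Ω), MeasurableSet S → MeasureTheory.Integrable (fun ω => (M i).t ω S) μ := by
    intro i S hS
    refine MeasureTheory.Integrable.mono' (MeasureTheory.integrable_const 1)
      ((M i).t_meas S hS).aestronglyMeasurable (Filter.Eventually.of_forall fun ω => ?_)
    rw [Real.norm_eq_abs, abs_of_nonneg ((M i).t_nonneg ω S)]
    exact (M i).t_le_one ω S
  have hintind : ∀ i (c : ℝ), MeasureTheory.Integrable ((D i).indicator (fun _ => c)) μ :=
    fun i c => (MeasureTheory.integrable_const c).indicator (hDmeas i)
  -- inequality (1): q * d i ≤ f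
  have h1 : ∀ i, q * d i ≤ f := by
    intro i
    have hpt : ∀ ω, (D i).indicator (fun _ => q) ω ≤ (M i).t ω F := by
      intro ω
      by_cases hω : ω ∈ D i
      · rw [Set.indicator_of_mem hω]; exact hDq i ω hω
      · rw [Set.indicator_of_notMem hω]; exact (M i).t_nonneg ω F
    have := MeasureTheory.integral_mono (hintind i q) (hint i F hFmeas) hpt
    rw [MeasureTheory.integral_indicator_const q (hDmeas i), measureReal_def] at this
    rw [hf, (hreg i).2.1 F hFmeas]
    rw [smul_eq_mul] at this
    linarith [this]
  -- inequality (2): f ≤ d i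
  have h2 : ∀ i, f ≤ d i := by
    intro i
    have hpt : ∀ ω, (M i).t ω F ≤ (D i).indicator (fun _ => (1:ℝ)) ω := by
      intro ω
      by_cases hω : ω ∈ D i
      · rw [Set.indicator_of_mem hω]; exact (M i).t_le_one ω F
      · rw [Set.indicator_of_notMem hω, hDF0 i ω hω]
    have := MeasureTheory.integral_mono (hint i F hFmeas) (hintind i 1) hpt
    rw [MeasureTheory.integral_indicator_const (1:ℝ) (hDmeas i), smul_eq_mul, mul_one] at this
    rw [hf, (hreg i).2.1 F hFmeas]
    exact this
  -- inequality (3): x ≤ r j * d j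
  have h3 : ∀ j, x ≤ r j * d j := by
    intro j
    have hpt : ∀ ω, (M j).t ω (E ∩ F) ≤ (D j).indicator (fun _ => r j) ω := by
      intro ω
      by_cases hω : ω ∈ D j
      · rw [Set.indicator_of_mem hω]
        calc (M j).t ω (E ∩ F) ≤ (M j).t ω E :=
              t_mono' (M j) (hreg j) (hE.inter hFmeas) hE Set.inter_subset_left ω
          _ = r j := hDr j ω hω
      · rw [Set.indicator_of_notMem hω]
        calc (M j).t ω (E ∩ F) ≤ (M j).t ω F :=
              t_mono' (M j) (hreg j) (hE.inter hFmeas) hFmeas Set.inter_subset_right ω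
          _ = 0 := hDF0 j ω hω
    have := MeasureTheory.integral_mono (hint j _ (hE.inter hFmeas)) (hintind j (r j)) hpt
    rw [MeasureTheory.integral_indicator_const (r j) (hDmeas j), smul_eq_mul, measureReal_def] at this
    rw [hx, (hreg j).2.1 _ (hE.inter hFmeas)]
    linarith [this]
  -- inequality (4): f - (1 - r i) * d i ≤ x
  have h4 : ∀ i, f - (1 - r i) * d i ≤ x := by
    intro i
    have hpt : ∀ ω, (M i).t ω F - (D i).indicator (fun _ => 1 - r i) ω ≤ (M i).t ω (E ∩ F) := by
      intro ω
      by_cases hω : ω ∈ D i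
      · rw [Set.indicator_of_mem hω]
        have hadd := t_add' (M i) (hreg i) hE hFmeas ω
        have hEc : (M i).t ω (Eᶜ ∩ F) ≤ 1 - r i := by
          have := t_mono' (M i) (hreg i) (hE.compl.inter hFmeas) hE.compl
            Set.inter_subset_left ω
          rw [t_compl' (M i) (hreg i) hE, hDr i ω hω] at this
          exact this
        linarith
      · rw [Set.indicator_of_notMem hω, hDF0 i ω hω]
        simpa using (M i).t_nonneg ω (E ∩ F)
    have hsub : MeasureTheory.Integrable
        (fun ω => (M i).t ω F - (D i).indicator (fun _ => 1 - r i) ω) μ :=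
      (hint i F hFmeas).sub (hintind i (1 - r i))
    have := MeasureTheory.integral_mono hsub (hint i _ (hE.inter hFmeas)) hpt
    rw [MeasureTheory.integral_sub (hint i F hFmeas) (hintind i (1 - r i)),
      MeasureTheory.integral_indicator_const (1 - r i) (hDmeas i), smul_eq_mul, measureReal_def] at this
    rw [hx, (hreg i).2.1 _ (hE.inter hFmeas), hf, (hreg i).2.1 F hFmeas]
    linarith [this]
  -- positivity of f
  have hfpos : 0 < f := by
    obtain ⟨ω₀, hω₀⟩ := hne
    rw [hFeq] at hω₀
    set i₀ := Classical.arbitrary I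
    have hPD : (M i₀).P ω₀ ⊆ D i₀ := by
      intro ω' hω'
      exact (hDsat i₀ ω₀ ω' hω').mp (hFD i₀ hω₀)
    have hμP : 0 < μ ((M i₀).P ω₀) := (M i₀).P_pos ω₀
    have hμD : 0 < μ (D i₀) := lt_of_lt_of_le hμP (measure_mono hPD)
    have hdpos : 0 < d i₀ := ENNReal.toReal_pos (ne_of_gt hμD) (measure_ne_top μ _)
    have := h1 i₀
    nlinarith
  -- conclusion
  intro i j
  have e1 : f ≤ (1 - r i) * d i + r j * d j := by
    have := h4 i
    have := h3 j
    linarith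
  have e2 : (1 - r i) * (q * d i) ≤ (1 - r i) * f :=
    mul_le_mul_of_nonneg_left (h1 i) (by linarith [(hr i).2])
  have e3 : r j * (q * d j) ≤ r j * f :=
    mul_le_mul_of_nonneg_left (h1 j) (hr j).1
  have e4 : q * f ≤ q * ((1 - r i) * d i + r j * d j) :=
    mul_le_mul_of_nonneg_left e1 hq0.le
  have e5 : q * f ≤ (1 - r i + r j) * f := by nlinarith
  have e6 : q ≤ 1 - r i + r j := le_of_mul_le_mul_right (by linarith) hfpos
  linarith

end Master

section Qual

variable {Ω : Type} [MeasurableSpace Ω] {μ : MeasureTheory.Measure Ω} {I : Type}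

lemma G_meas (M : I → EpiModel Ω μ) [Countable I] {S : Set Ω} (hS : MeasurableSet S) :
    MeasurableSet (G M S) :=
  MeasurableSet.iInter fun i => (M i).K_meas S hS

lemma G_sub_Finter_one (M : I → EpiModel Ω μ) (hreg : ∀ i, (M i).Regular) {S : Set Ω}
    (hS : MeasurableSet S) : G M S ⊆ Finter M 1 S := by
  intro ω hω
  simp only [G, EpiModel.K, Set.mem_iInter, Set.mem_setOf_eq] at hω
  simp only [Finter, EpiModel.B, Set.mem_iInter, Set.mem_setOf_eq]
  intro i
  exact le_of_eq (t_one_of_superset (M i) (hreg i) hS (hω i)).symm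

lemma Cqual_sub_Cp_one (M : I → EpiModel Ω μ) [Countable I] (hreg : ∀ i, (M i).Regular)
    {A : Set Ω} (hA : MeasurableSet A) : Cqual M A ⊆ Cp M 1 A := by
  have hGm : ∀ n, MeasurableSet ((G M)^[n] A) := by
    intro n
    induction n with
    | zero => exact hA
    | succ n ih => rw [Function.iterate_succ_apply']; exact G_meas M ih
  have hFm : ∀ n, MeasurableSet ((Finter M 1)^[n] A) := by
    intro n
    induction n with
    | zero => exact hA
    | succ n ih => rw [Function.iterate_succ_apply']; exact Finter_meas M ih 1
  have key : ∀ n, (G M)^[n + 1] A ⊆ (Finter M 1)^[n + 1] A := by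
    intro n
    induction n with
    | zero =>
      rw [Function.iterate_succ_apply' (G M), Function.iterate_succ_apply' (Finter M 1),
        Function.iterate_zero_apply, Function.iterate_zero_apply]
      exact G_sub_Finter_one M hreg hA
    | succ n ih =>
      rw [Function.iterate_succ_apply' (G M), Function.iterate_succ_apply' (Finter M 1)]
      refine Set.Subset.trans (G_sub_Finter_one M hreg (hGm (n+1))) ?_
      exact Finter_mono M hreg (hGm (n+1)) (hFm (n+1)) ih
  exact Set.iInter_mono key

end Qual

/-- Proposition 3, Agreement theorem. -/
theorem statement12 {Ω : Type} [MeasurableSpace Ω] {μ : MeasureTheory.Measure Ω}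
    {I : Type} [Countable I] [Nonempty I]
    (M : I → EpiModel Ω μ) (hreg : ∀ i, (M i).Regular)
    (E : Set Ω) (hE : MeasurableSet E) (p : ℝ) (hp : p ∈ Set.Icc (0 : ℝ) 1)
    (r : I → ℝ) (hr : ∀ i, r i ∈ Set.Icc (0 : ℝ) 1) :
    (Cp M p (⋂ i, {ω : Ω | (M i).t ω E = r i}) ≠ ∅ →
      ∀ i j, |r i - r j| ≤ 1 - p) ∧
    (Cqual M (⋂ i, {ω : Ω | (M i).t ω E = r i}) ≠ ∅ →
      ∀ i j, r i = r j) := by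
  have hA : MeasurableSet (⋂ i, {ω : Ω | (M i).t ω E = r i}) :=
    MeasurableSet.iInter fun i => measurableSet_eq_fun ((M i).t_meas E hE) measurable_const
  constructor
  · intro hne i j
    rcases eq_or_lt_of_le hp.1 with hp0 | hp0
    · rw [← hp0]
      rw [abs_sub_le_iff]
      constructor
      · linarith [(hr i).1, (hr i).2, (hr j).1, (hr j).2]
      · linarith [(hr i).1, (hr i).2, (hr j).1, (hr j).2]
    · have hne' := Set.nonempty_iff_ne_empty.mpr hne
      rw [abs_sub_le_iff]
      exact ⟨agree_master M hreg E hE hp0 hp.2 r hr hne' i j,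
        agree_master M hreg E hE hp0 hp.2 r hr hne' j i⟩
  · intro hne i j
    have hne' : (Cp M 1 (⋂ i, {ω : Ω | (M i).t ω E = r i})).Nonempty :=
      Set.Nonempty.mono (Cqual_sub_Cp_one M hreg hA) (Set.nonempty_iff_ne_empty.mpr hne)
    have h1 := agree_master M hreg E hE one_pos le_rfl r hr hne' i j
    have h2 := agree_master M hreg E hE one_pos le_rfl r hr hne' j i
    linarith
end

section
/- Let (Ω, Σ, μ, P, t) be an epistemic model with (↑t(ω)), (↓t(ω)), and hence [t(ω)] measurable for every ω. The following are equivalent: (a) {P(ω)}_{ω∈Ω} is a partition (ω ∈ P(ω) for every ω, and ω' ∈ P(ω) implies P(ω') = P(ω)); Invariance holds; Entailment holds; Self-Evidence of Beliefs holds; and each t(ω,·) is the restriction of a countably additive probability measure on (Ω,Σ); (b) P(ω) = [t(ω)] for every ω, and t(ω,E) = μ(E ∩ P(ω)) / μ(P(ω)) for every ω and every measurable E. -/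
open MeasureTheory

/-- Corollary 5.1: equivalence of partitional consistency and
`P(·) = [t(·)]` together with Bayes conditioning. -/
theorem statement13 {Ω : Type} [MeasurableSpace Ω] {μ : MeasureTheory.Measure Ω}
    (M : EpiModel Ω μ)
    (hup : ∀ ω, MeasurableSet (M.up ω)) (hdown : ∀ ω, MeasurableSet (M.down ω)) :
    (M.Partitional ∧ M.Invariance ∧ M.Entailment ∧ M.SelfEvidence ∧
        M.AdditiveTypes) ↔
      ((∀ ω, M.P ω = M.cl ω) ∧ M.Bayes) := by
  haveI := M.prob
  have hpos : ∀ ω, 0 < (μ (M.P ω)).toReal :=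
    fun ω => ENNReal.toReal_pos (M.P_pos ω).ne' (measure_ne_top μ _)
  constructor
  · rintro ⟨hpart, hinv, hent, hse, hadd⟩
    choose ν hνprob hνrepr using hadd
    have hν1 : ∀ ω, ν ω (M.P ω) = 1 := by
      intro ω
      have h := hνrepr ω (M.P ω) (M.P_meas ω)
      rw [hent ω] at h
      exact (ENNReal.toReal_eq_one_iff _).mp h.symm
    have hνc : ∀ ω, ν ω (M.P ω)ᶜ = 0 := by
      intro ω
      haveI := hνprob ω
      rw [prob_compl_eq_zero_iff (M.P_meas ω)]
      exact hν1 ω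
    have hconst : ∀ ω ω', ω' ∈ M.P ω → ∀ E, MeasurableSet E →
        M.t ω' E = M.t ω E := by
      intro ω ω' h E hE
      have h2 : ω ∈ M.P ω' := (hpart.2 ω ω' h) ▸ hpart.1 ω
      exact le_antisymm (hse ω' h2 E hE) (hse ω h E hE)
    have hdisj : ∀ ω ω', M.P ω ≠ M.P ω' → Disjoint (M.P ω) (M.P ω') := by
      intro ω ω' hne
      rw [Set.disjoint_left]
      intro x hx hx'
      exact hne ((hpart.2 ω x hx).symm.trans (hpart.2 ω' x hx'))
    have hBayes : M.Bayes := by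
      intro ω E hE
      have hCm := M.P_meas ω
      have hEC : MeasurableSet (E ∩ M.P ω) := hE.inter hCm
      have hpt : ∀ ω', M.t ω' (E ∩ M.P ω) =
          (M.P ω).indicator (fun _ => M.t ω E) ω' := by
        intro ω'
        by_cases h : ω' ∈ M.P ω
        · rw [Set.indicator_of_mem h, hconst ω ω' h _ hEC,
            hνrepr ω _ hEC, hνrepr ω E hE]
          congr 1
          have h0 : ν ω (E \ M.P ω) = 0 :=
            measure_mono_null (Set.diff_subset_compl E (M.P ω)) (hνc ω)
          have h2 := measure_inter_add_diff (μ := ν ω) E hCm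
          rw [h0, add_zero] at h2
          exact h2
        · rw [Set.indicator_of_notMem h]
          have hne : M.P ω' ≠ M.P ω := fun hh => h (hh ▸ hpart.1 ω')
          have hsub : E ∩ M.P ω ⊆ (M.P ω')ᶜ := by
            intro x hx hx'
            exact Set.disjoint_left.mp (hdisj ω' ω hne) hx' hx.2
          have h0 : ν ω' (E ∩ M.P ω) = 0 := measure_mono_null hsub (hνc ω')
          rw [hνrepr ω' _ hEC, h0]
          simp
      have hint := hinv _ hEC
      simp only [hpt] at hint
      rw [integral_indicator_const (M.t ω E) hCm, smul_eq_mul] at hint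
      rw [eq_div_iff (hpos ω).ne']
      rw [show μ.real (M.P ω) = (μ (M.P ω)).toReal from rfl] at hint
      linarith [hint]
    refine ⟨?_, hBayes⟩
    intro ω
    apply Set.Subset.antisymm
    · intro ω' h
      exact ⟨fun E hE => (hconst ω ω' h E hE).symm.le,
        fun E hE => (hconst ω ω' h E hE).le⟩
    · rintro ω' ⟨h1, h2⟩
      have ht : M.t ω' (M.P ω) = 1 := by
        have hle := h1 (M.P ω) (M.P_meas ω)
        rw [hent ω] at hle
        exact le_antisymm (M.t_le_one _ _) hle
      have hν1' : ν ω' (M.P ω) = 1 :=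
        (ENNReal.toReal_eq_one_iff _).mp
          ((hνrepr ω' _ (M.P_meas ω)).symm.trans ht)
      haveI := hνprob ω'
      have hc1 : ν ω' (M.P ω)ᶜ = 0 := by
        rw [prob_compl_eq_zero_iff (M.P_meas ω)]; exact hν1'
      have hcompl : ν ω' ((M.P ω ∩ M.P ω')ᶜ) = 0 := by
        rw [Set.compl_inter]
        refine le_antisymm (le_trans (measure_union_le _ _) ?_) zero_le
        rw [hc1, hνc ω', add_zero]
      have hne0 : ν ω' (M.P ω ∩ M.P ω') ≠ 0 := by
        rw [prob_compl_eq_zero_iff ((M.P_meas ω).inter (M.P_meas ω'))] at hcompl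
        rw [hcompl]; exact one_ne_zero
      obtain ⟨x, hx1, hx2⟩ := nonempty_of_measure_ne_zero hne0
      have hPP : M.P ω' = M.P ω := (hpart.2 ω' x hx2).symm.trans (hpart.2 ω x hx1)
      exact hPP ▸ hpart.1 ω'
  · rintro ⟨hPcl, hB⟩
    have hmemcl : ∀ ω, ω ∈ M.cl ω :=
      fun ω => ⟨fun E _ => le_rfl, fun E _ => le_rfl⟩
    have hclconst : ∀ ω ω', ω' ∈ M.P ω → ∀ E, MeasurableSet E →
        M.t ω' E = M.t ω E := by
      intro ω ω' h E hE
      rw [hPcl ω] at h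
      exact le_antisymm (h.2 E hE) (h.1 E hE)
    have hpart : M.Partitional := by
      refine ⟨fun ω => (hPcl ω).symm ▸ hmemcl ω, ?_⟩
      intro ω ω' h
      have heq := hclconst ω ω' h
      rw [hPcl ω', hPcl ω]
      ext x
      simp only [EpiModel.cl, EpiModel.up, EpiModel.down, Set.mem_inter_iff,
        Set.mem_setOf_eq]
      constructor
      · rintro ⟨h1, h2⟩
        exact ⟨fun E hE => by rw [← heq E hE]; exact h1 E hE,
          fun E hE => by rw [← heq E hE]; exact h2 E hE⟩
      · rintro ⟨h1, h2⟩
        exact ⟨fun E hE => by rw [heq E hE]; exact h1 E hE,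
          fun E hE => by rw [heq E hE]; exact h2 E hE⟩
    have hdisj : ∀ ω ω', M.P ω ≠ M.P ω' → Disjoint (M.P ω) (M.P ω') := by
      intro ω ω' hne
      rw [Set.disjoint_left]
      intro x hx hx'
      exact hne ((hpart.2 ω x hx).symm.trans (hpart.2 ω' x hx'))
    have hent : M.Entailment := by
      intro ω
      rw [hB ω (M.P ω) (M.P_meas ω), Set.inter_self]
      exact div_self (hpos ω).ne'
    have hse : M.SelfEvidence := by
      intro ω
      rw [hPcl ω]
      exact Set.inter_subset_left
    have hadd : M.AdditiveTypes := by
      intro ω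
      refine ⟨(μ (M.P ω))⁻¹ • μ.restrict (M.P ω), ?_, ?_⟩
      · constructor
        rw [Measure.smul_apply, Measure.restrict_apply_univ, smul_eq_mul]
        exact ENNReal.inv_mul_cancel (M.P_pos ω).ne' (measure_ne_top μ _)
      · intro E hE
        rw [hB ω E hE, Measure.smul_apply, Measure.restrict_apply hE,
          smul_eq_mul, ENNReal.toReal_mul, ENNReal.toReal_inv, div_eq_inv_mul]
    have hinv : M.Invariance := by
      intro E hE
      set S : Set (Set Ω) := Set.range M.P with hS
      have hSm : ∀ C ∈ S, MeasurableSet C := by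
        rintro C ⟨ω, rfl⟩; exact M.P_meas ω
      have hSd : S.PairwiseDisjoint id := by
        rintro C ⟨ω, rfl⟩ C' ⟨ω', rfl⟩ hne
        exact hdisj ω ω' hne
      have hScnt : S.Countable := by
        have hcnt := MeasureTheory.Measure.countable_meas_pos_of_disjoint_iUnion
          (μ := μ) (As := fun C : S => (C : Set Ω)) (fun C => hSm C C.2)
          (fun C C' hne => hSd C.2 C'.2 (fun h => hne (Subtype.ext h)))
        have huniv : {C : S | 0 < μ (C : Set Ω)} = Set.univ := by
          ext C
          obtain ⟨C, ω, rfl⟩ := C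
          simpa using M.P_pos ω
        rw [huniv, Set.countable_univ_iff] at hcnt
        exact Set.countable_coe_iff.mp hcnt
      have hScov : ⋃ C ∈ S, C = Set.univ := by
        apply Set.eq_univ_of_forall
        intro x
        exact Set.mem_biUnion ⟨x, rfl⟩ (hpart.1 x)
      set g : Ω → ENNReal := fun ω => μ (E ∩ M.P ω) / μ (M.P ω) with hg
      have hgt : ∀ ω, M.t ω E = (g ω).toReal := by
        intro ω
        rw [hB ω E hE, hg]
        simp [ENNReal.toReal_div]
      have hgne : ∀ ω, g ω ≠ ⊤ := fun ω =>
        (ENNReal.div_lt_top (measure_ne_top μ _) (M.P_pos ω).ne').ne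
      have hgof : ∀ ω, ENNReal.ofReal (M.t ω E) = g ω := by
        intro ω
        rw [hgt ω, ENNReal.ofReal_toReal (hgne ω)]
      have hlint : ∫⁻ ω, g ω ∂μ = μ E := by
        conv_lhs => rw [← setLIntegral_univ, ← hScov]
        rw [lintegral_biUnion hScnt hSm hSd]
        have hterm : ∀ C : S, ∫⁻ ω in (C : Set Ω), g ω ∂μ
            = μ (E ∩ (C : Set Ω)) := by
          rintro ⟨C, ω₀, rfl⟩
          have hcc : ∀ ω ∈ M.P ω₀, g ω = μ (E ∩ M.P ω₀) / μ (M.P ω₀) := by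
            intro ω hω
            rw [hg]
            simp only
            rw [hpart.2 ω₀ ω hω]
          rw [setLIntegral_congr_fun (M.P_meas ω₀) hcc,
            setLIntegral_const,
            ENNReal.div_mul_cancel (M.P_pos ω₀).ne' (measure_ne_top μ _)]
        rw [tsum_congr hterm]
        have hd2 : S.PairwiseDisjoint (fun C => E ∩ C) := by
          intro C hC C' hC' hne
          exact (hSd hC hC' hne).mono Set.inter_subset_right Set.inter_subset_right
        rw [← measure_biUnion hScnt hd2 (fun C hC => hE.inter (hSm C hC))]
        congr 1
        rw [← Set.inter_iUnion₂, hScov, Set.inter_univ]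
      rw [integral_eq_lintegral_of_nonneg_ae
        (Filter.Eventually.of_forall (fun ω => M.t_nonneg ω E))
        (M.t_meas E hE).aestronglyMeasurable]
      simp_rw [hgof]
      rw [hlint]
    exact ⟨hpart, hinv, hent, hse, hadd⟩
end

section
/- Let (Ω, Σ, μ, P, t) be an epistemic model satisfying Invariance, Entailment, and Self-Evidence of Beliefs, in which each t(ω,·) is the restriction of a countably additive probability measure on (Ω,Σ) and (↑t(ω)), (↓t(ω)), [t(ω)] are measurable for every ω. Then {P(ω)}_{ω∈Ω} is a partition (ω ∈ P(ω) for every ω, and ω' ∈ P(ω) implies P(ω') = P(ω)) if and only if P(ω) = [t(ω)] for every ω. -/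
open MeasureTheory

/-- Corollary 5.2: under the consistency conditions,
`{P(ω)}` is a partition iff `P(·) = [t(·)]`. -/
theorem statement14 {Ω : Type} [MeasurableSpace Ω] {μ : MeasureTheory.Measure Ω}
    (M : EpiModel Ω μ)
    (hinv : M.Invariance) (hent : M.Entailment) (hse : M.SelfEvidence)
    (hadd : M.AdditiveTypes)
    (hup : ∀ ω, MeasurableSet (M.up ω)) (hdown : ∀ ω, MeasurableSet (M.down ω)) :
    M.Partitional ↔ ∀ ω, M.P ω = M.cl ω := by
  constructor
  · rintro ⟨hrefl, hpart⟩ ω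
    apply Set.Subset.antisymm
    · intro ω' hω'
      refine ⟨hse ω hω', ?_⟩
      intro E hE
      exact hse ω' ((hpart ω ω' hω') ▸ hrefl ω) E hE
    · rintro ω' ⟨hu, hd⟩
      -- t ω' agrees with t ω on measurable sets
      have heq : ∀ E : Set Ω, MeasurableSet E → M.t ω' E = M.t ω E := by
        intro E hE; exact le_antisymm (hd E hE) (hu E hE)
      obtain ⟨ν, hν, hνt⟩ := hadd ω
      have h1 : ν (M.P ω) = 1 := by
        have := hνt (M.P ω) (M.P_meas ω)
        rw [hent ω] at this
        haveI := hν; have hle := prob_le_one (μ := ν) (s := M.P ω)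
        rcases eq_or_lt_of_le hle with h | h
        · exact h
        · exfalso
          have : ((ν (M.P ω)).toReal : ℝ) < 1 := by
            rw [← ENNReal.toReal_one]
            exact ENNReal.toReal_strict_mono ENNReal.one_ne_top h
          linarith [this.trans_eq rfl, this]
      have h2 : ν (M.P ω') = 1 := by
        have ht : M.t ω (M.P ω') = 1 := by
          rw [← heq (M.P ω') (M.P_meas ω'), hent ω']
        have := hνt (M.P ω') (M.P_meas ω')
        rw [ht] at this
        haveI := hν; have hle := prob_le_one (μ := ν) (s := M.P ω')
        rcases eq_or_lt_of_le hle with h | h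
        · exact h
        · exfalso
          have hlt : ((ν (M.P ω')).toReal : ℝ) < 1 := by
            rw [← ENNReal.toReal_one]
            exact ENNReal.toReal_strict_mono ENNReal.one_ne_top h
          linarith
      -- P ω and P ω' intersect
      have hne : (M.P ω' ∩ M.P ω).Nonempty := by
        by_contra hcon
        rw [Set.not_nonempty_iff_eq_empty] at hcon
        have hsub : M.P ω' ⊆ (M.P ω)ᶜ := Set.subset_compl_iff_disjoint_right.mpr
          (Set.disjoint_iff_inter_eq_empty.mpr hcon)
        have hc : ν (M.P ω)ᶜ = 0 := by
          rw [prob_compl_eq_zero_iff (M.P_meas ω)]; exact h1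
        have := measure_mono (μ := ν) hsub
        rw [h2, hc] at this
        exact one_ne_zero (le_antisymm this zero_le)
      obtain ⟨x, hx', hx⟩ := hne
      have : M.P ω' = M.P ω := by
        rw [← hpart ω' x hx', ← hpart ω x hx]
      rw [← this]; exact hrefl ω'
  · intro h
    constructor
    · intro ω
      rw [h ω]
      exact ⟨fun E _ => le_refl _, fun E _ => le_refl _⟩
    · intro ω ω' hω'
      rw [h ω] at hω'
      obtain ⟨hu, hd⟩ := hω'
      have heq : ∀ E : Set Ω, MeasurableSet E → M.t ω' E = M.t ω E :=
        fun E hE => le_antisymm (hd E hE) (hu E hE)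
      rw [h ω', h ω]
      unfold EpiModel.cl EpiModel.up EpiModel.down
      ext x
      simp only [Set.mem_inter_iff, Set.mem_setOf_eq]
      constructor
      · rintro ⟨a, b⟩
        exact ⟨fun E hE => (heq E hE) ▸ a E hE, fun E hE => (heq E hE) ▸ b E hE⟩
      · rintro ⟨a, b⟩
        exact ⟨fun E hE => (heq E hE).symm ▸ a E hE, fun E hE => (heq E hE).symm ▸ b E hE⟩
end

section
/- Let (Ω, Σ, μ, P, t) be an epistemic model such that P(ω) = [t(ω)] for every ω and each t(ω,·) is the restriction of a countably additive probability measure on (Ω,Σ), with (↑t(ω)), (↓t(ω)), [t(ω)] measurable for every ω. Then the model satisfies Entailment and Invariance if and only if t(ω,E) = μ(E ∩ P(ω)) / μ(P(ω)) for every ω and every measurable E. -/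
open MeasureTheory

/-- Corollary 5.3: under `P(·) = [t(·)]` and additive types,
Entailment and Invariance hold iff `t(·,·) = μ(· | P(·))`. -/
theorem statement15 {Ω : Type} [MeasurableSpace Ω] {μ : MeasureTheory.Measure Ω}
    (M : EpiModel Ω μ)
    (hP : ∀ ω, M.P ω = M.cl ω) (hadd : M.AdditiveTypes)
    (hup : ∀ ω, MeasurableSet (M.up ω)) (hdown : ∀ ω, MeasurableSet (M.down ω)) :
    (M.Entailment ∧ M.Invariance) ↔ M.Bayes := by
  haveI := M.prob
  -- basic facts about the partition structure
  have hrefl : ∀ ω, ω ∈ M.P ω := by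
    intro ω
    rw [hP]
    exact ⟨fun E hE => le_refl _, fun E hE => le_refl _⟩
  have hteq : ∀ ω ω', ω' ∈ M.P ω → ∀ E, MeasurableSet E → M.t ω' E = M.t ω E := by
    intro ω ω' h E hE
    rw [hP] at h
    exact le_antisymm (h.2 E hE) (h.1 E hE)
  have hPeq : ∀ ω ω', ω' ∈ M.P ω → M.P ω' = M.P ω := by
    intro ω ω' h
    rw [hP, hP]
    ext x
    constructor
    · rintro ⟨h1, h2⟩
      exact ⟨fun E hE => (hteq ω ω' h E hE) ▸ h1 E hE,
             fun E hE => (hteq ω ω' h E hE) ▸ h2 E hE⟩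
    · rintro ⟨h1, h2⟩
      exact ⟨fun E hE => (hteq ω ω' h E hE).symm ▸ h1 E hE,
             fun E hE => (hteq ω ω' h E hE).symm ▸ h2 E hE⟩
  have hdisj : ∀ ω ω', M.P ω ≠ M.P ω' → Disjoint (M.P ω) (M.P ω') := by
    intro ω ω' hne
    rw [Set.disjoint_left]
    intro x hx hx'
    exact hne ((hPeq ω x hx).symm.trans (hPeq ω' x hx'))
  have hPtoReal : ∀ ω, 0 < (μ (M.P ω)).toReal :=
    fun ω => ENNReal.toReal_pos (M.P_pos ω).ne' (measure_ne_top μ _)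
  have hempty : ∀ ω, M.t ω ∅ = 0 := by
    intro ω
    obtain ⟨ν, hν, hνt⟩ := hadd ω
    rw [hνt ∅ MeasurableSet.empty]
    simp
  -- concentration: if t ω S = 1 then t ω E = t ω (E ∩ S)
  have hconc : ∀ ω (S : Set Ω), MeasurableSet S → M.t ω S = 1 →
      ∀ E, MeasurableSet E → M.t ω E = M.t ω (E ∩ S) := by
    intro ω S hS h1 E hE
    obtain ⟨ν, hν, hνt⟩ := hadd ω
    haveI := hν
    have hS1 : ν S = 1 := by
      have h := hνt S hS
      rw [h1] at h
      exact (ENNReal.toReal_eq_one_iff _).mp h.symm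
    have hzero : ν (E \ S) = 0 := by
      have hcompl : ν Sᶜ = 0 := by
        rw [measure_compl hS (measure_ne_top ν S), hS1, measure_univ, tsub_self]
      exact measure_mono_null (Set.diff_subset_compl E S) hcompl
    rw [hνt E hE, hνt (E ∩ S) (hE.inter hS)]
    congr 1
    have h := measure_inter_add_diff (μ := ν) E hS
    rw [hzero, add_zero] at h
    exact h.symm
  constructor
  · -- Entailment + Invariance → Bayes
    rintro ⟨hEnt, hInv⟩ ω0 E hE
    set C := M.P ω0 with hCdef
    have hC : MeasurableSet C := M.P_meas ω0
    have hc0 : M.t ω0 E = M.t ω0 (E ∩ C) := hconc ω0 C hC (hEnt ω0) E hE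
    have hind : ∀ ω, M.t ω (E ∩ C) = Set.indicator C (fun _ => M.t ω0 (E ∩ C)) ω := by
      intro ω
      by_cases h : ω ∈ C
      · rw [Set.indicator_of_mem h]
        exact hteq ω0 ω h (E ∩ C) (hE.inter hC)
      · rw [Set.indicator_of_notMem h]
        have hne : M.P ω0 ≠ M.P ω := by
          intro heq
          exact h (hCdef ▸ heq ▸ hrefl ω)
        have hd := hdisj ω0 ω hne
        have h0 : (E ∩ C) ∩ M.P ω = ∅ := by
          ext x
          simp only [Set.mem_inter_iff, Set.mem_empty_iff_false, iff_false, not_and]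
          rintro ⟨hxE, hxC⟩ hxP
          exact (Set.disjoint_left.mp hd) hxC hxP
        rw [hconc ω (M.P ω) (M.P_meas ω) (hEnt ω) (E ∩ C) (hE.inter hC), h0, hempty ω]
    have hkey : (μ (E ∩ C)).toReal = (μ C).toReal • M.t ω0 (E ∩ C) := by
      calc (μ (E ∩ C)).toReal = ∫ ω, M.t ω (E ∩ C) ∂μ := hInv (E ∩ C) (hE.inter hC)
        _ = ∫ ω, Set.indicator C (fun _ => M.t ω0 (E ∩ C)) ω ∂μ := by
            exact integral_congr_ae (Filter.Eventually.of_forall hind)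
        _ = (μ C).toReal • M.t ω0 (E ∩ C) := integral_indicator_const _ hC
    rw [hc0, eq_div_iff (hPtoReal ω0).ne']
    rw [smul_eq_mul] at hkey
    rw [← hCdef]
    linarith [hkey]
  · -- Bayes → Entailment + Invariance
    intro hB
    constructor
    · intro ω
      rw [hB ω (M.P ω) (M.P_meas ω), Set.inter_self]
      exact div_self (hPtoReal ω).ne'
    · intro E hE
      set S : Set (Set Ω) := Set.range M.P with hSdef
      have hrep : ∀ s : S, ∃ a, M.P a = (s : Set Ω) := fun s => s.2
      choose rep hrep using hrep
      have hmeas : ∀ s : S, MeasurableSet (s : Set Ω) := fun s => hrep s ▸ M.P_meas (rep s)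
      have hd : Pairwise (Function.onFun Disjoint fun s : S => (s : Set Ω)) := by
        intro s s' hne
        have hne' : M.P (rep s) ≠ M.P (rep s') := by
          rw [hrep s, hrep s']
          exact fun h => hne (Subtype.ext h)
        have := hdisj (rep s) (rep s') hne'
        rw [hrep s, hrep s'] at this
        exact this
      haveI : Countable S := by
        have hc := MeasureTheory.Measure.countable_meas_pos_of_disjoint_iUnion
          (μ := μ) hmeas hd
        have huniv : {i : S | 0 < μ (i : Set Ω)} = Set.univ := by
          ext i
          simp only [Set.mem_setOf_eq, Set.mem_univ, iff_true]
          rw [← hrep i]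
          exact M.P_pos (rep i)
        rw [huniv] at hc
        exact Set.countable_univ_iff.mp hc
      have hcover : (⋃ s : S, (s : Set Ω)) = Set.univ := by
        ext x
        simp only [Set.mem_iUnion, Set.mem_univ, iff_true]
        exact ⟨⟨M.P x, Set.mem_range_self x⟩, hrefl x⟩
      have hint : Integrable (fun ω => M.t ω E) μ := by
        apply Integrable.mono' (integrable_const (1 : ℝ))
          (M.t_meas E hE).aestronglyMeasurable
        filter_upwards with ω
        rw [Real.norm_eq_abs, abs_le]
        exact ⟨by linarith [M.t_nonneg ω E], M.t_le_one ω E⟩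
      calc (μ E).toReal
          = (μ (⋃ s : S, E ∩ (s : Set Ω))).toReal := by
            rw [← Set.inter_iUnion, hcover, Set.inter_univ]
        _ = (∑' s : S, μ (E ∩ (s : Set Ω))).toReal := by
            rw [measure_iUnion
              (fun s s' hne => ((hd hne).mono Set.inter_subset_right Set.inter_subset_right))
              (fun s => hE.inter (hmeas s))]
        _ = ∑' s : S, (μ (E ∩ (s : Set Ω))).toReal :=
            ENNReal.tsum_toReal_eq (fun s => measure_ne_top μ _)
        _ = ∑' s : S, ∫ ω in (s : Set Ω), M.t ω E ∂μ := by
            apply tsum_congr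
            intro s
            have hconst : Set.EqOn (fun ω => M.t ω E) (fun _ => M.t (rep s) E) (s : Set Ω) := by
              intro ω hω
              have hωP : ω ∈ M.P (rep s) := by rw [hrep s]; exact hω
              exact hteq (rep s) ω hωP E hE
            rw [setIntegral_congr_fun (hmeas s) hconst, setIntegral_const, measureReal_def,
              hB (rep s) E hE, hrep s, smul_eq_mul, mul_comm,
              div_mul_cancel₀ _ (by rw [← hrep s]; exact (hPtoReal (rep s)).ne')]
        _ = ∫ ω in ⋃ s : S, (s : Set Ω), M.t ω E ∂μ :=
            (integral_iUnion hmeas hd hint.integrableOn).symm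
        _ = ∫ ω, M.t ω E ∂μ := by rw [hcover, setIntegral_univ]
end

section
/- Let (Ω, Σ, μ, P, t) be a regular epistemic model (with (↑t(ω)), (↓t(ω)) measurable for every ω). Then B^1 and K satisfy Truth Axiom μ-almost surely: for every measurable E, μ(B^1(E) ∖ E) = 0 and μ(K(E) ∖ E) = 0. Moreover, for every ω ∈ Ω and every measurable E, t(ω, B^1(E) ∖ E) = 0 and t(ω, K(E) ∖ E) = 0. -/
open MeasureTheory

/-- Corollary 6.1: in a regular model, `B^1` and `K` satisfy
Truth Axiom μ-almost surely, and `t(ω,·)`-almost surely for all `ω`. -/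
theorem statement16 {Ω : Type} [MeasurableSpace Ω] {μ : MeasureTheory.Measure Ω}
    (M : EpiModel Ω μ) (hreg : M.Regular)
    (hup : ∀ ω, MeasurableSet (M.up ω)) (hdown : ∀ ω, MeasurableSet (M.down ω)) :
    ∀ E : Set Ω, MeasurableSet E →
      μ (M.B 1 E \ E) = 0 ∧ μ (M.K E \ E) = 0 ∧
      ∀ ω : Ω, M.t ω (M.B 1 E \ E) = 0 ∧ M.t ω (M.K E \ E) = 0 := by
  intro E hE
  haveI : IsProbabilityMeasure μ := M.prob
  obtain ⟨hadd, hinv, hent, hse⟩ := hreg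
  set G := M.B 1 E with hGdef
  have hGmeas : MeasurableSet G := (M.t_meas E hE) measurableSet_Ici
  -- ν (P ω) = 1 for the representing measure
  have hnu : ∀ ω, ∃ ν : Measure Ω, IsProbabilityMeasure ν ∧
      (∀ A : Set Ω, MeasurableSet A → M.t ω A = (ν A).toReal) ∧ ν (M.P ω) = 1 := by
    intro ω
    obtain ⟨ν, hνp, hνeq⟩ := hadd ω
    refine ⟨ν, hνp, hνeq, ?_⟩
    have h1 : (ν (M.P ω)).toReal = 1 := by rw [← hνeq _ (M.P_meas ω)]; exact hent ω
    have hfin : ν (M.P ω) ≠ ⊤ := measure_ne_top ν _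
    rw [← ENNReal.ofReal_toReal hfin, h1]; simp
  -- K E ⊆ G
  have hKsub : M.K E ⊆ G := by
    intro ω hω
    obtain ⟨ν, hνp, hνeq, hP1⟩ := hnu ω
    have hνE : ν E = 1 := le_antisymm prob_le_one (hP1 ▸ measure_mono hω)
    show (1:ℝ) ≤ M.t ω E
    rw [hνeq E hE, hνE]; simp
  -- on G, t(ω, E ∩ G) = 1
  have htEG : ∀ ω ∈ G, M.t ω (E ∩ G) = 1 := by
    intro ω hω
    obtain ⟨ν, hνp, hνeq, hP1⟩ := hnu ω
    have htE : M.t ω E = 1 := le_antisymm (M.t_le_one ω E) hω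
    have hνE : ν E = 1 := by
      have h1 : (ν E).toReal = 1 := by rw [← hνeq E hE]; exact htE
      have hfin : ν E ≠ ⊤ := measure_ne_top ν _
      rw [← ENNReal.ofReal_toReal hfin, h1]; simp
    have hPG : M.P ω ⊆ G := by
      intro ω' hω'
      have := hse ω hω' E hE
      exact le_trans hω this
    have hνG : ν G = 1 := le_antisymm prob_le_one (hP1 ▸ measure_mono hPG)
    have hνEG : ν (E ∩ G) = 1 := by
      have hc : ν (E ∩ G)ᶜ = 0 := by
        rw [Set.compl_inter]
        refine measure_union_null ?_ ?_
        · exact (prob_compl_eq_zero_iff hE).mpr hνE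
        · exact (prob_compl_eq_zero_iff hGmeas).mpr hνG
      have := prob_compl_eq_zero_iff (μ := ν) (hE.inter hGmeas)
      exact this.mp hc
    rw [hνeq _ (hE.inter hGmeas), hνEG]; simp
  -- μ (G \ E) = 0
  have hμF : μ (G \ E) = 0 := by
    have hint2 : Integrable (fun ω => M.t ω (E ∩ G)) μ := by
      refine Integrable.mono' (integrable_const (1:ℝ))
        ((M.t_meas _ (hE.inter hGmeas)).aestronglyMeasurable) ?_
      exact ae_of_all _ fun ω => by
        rw [Real.norm_eq_abs, abs_of_nonneg (M.t_nonneg ω _)]; exact M.t_le_one ω _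
    have hint1 : Integrable (G.indicator fun _ => (1:ℝ)) μ :=
      (integrable_const (1:ℝ)).indicator hGmeas
    have hmono : ∀ ω, G.indicator (fun _ => (1:ℝ)) ω ≤ M.t ω (E ∩ G) := by
      intro ω
      by_cases h : ω ∈ G
      · rw [Set.indicator_of_mem h, htEG ω h]
      · rw [Set.indicator_of_notMem h]; exact M.t_nonneg ω _
    have hle : (μ G).toReal ≤ (μ (E ∩ G)).toReal := by
      calc (μ G).toReal = ∫ ω, G.indicator (fun _ => (1:ℝ)) ω ∂μ := by
            rw [integral_indicator_const _ hGmeas]; simp; rfl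
        _ ≤ ∫ ω, M.t ω (E ∩ G) ∂μ := integral_mono hint1 hint2 hmono
        _ = (μ (E ∩ G)).toReal := (hinv _ (hE.inter hGmeas)).symm
    have heq : μ (E ∩ G) = μ G :=
      le_antisymm (measure_mono Set.inter_subset_right)
        ((ENNReal.toReal_le_toReal (measure_ne_top μ _) (measure_ne_top μ _)).mp hle)
    have hGE : G \ E = G \ (E ∩ G) := by ext x; simp
    rw [hGE, measure_diff Set.inter_subset_right (hE.inter hGmeas).nullMeasurableSet
      (measure_ne_top μ _), heq, tsub_self]
  have hFmeas : MeasurableSet (G \ E) := hGmeas.diff hE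
  -- t(ω, G \ E) = 0 for all ω
  have htF : ∀ ω, M.t ω (G \ E) = 0 := by
    have hI0 : ∫ ω, M.t ω (G \ E) ∂μ = 0 := by
      rw [← hinv _ hFmeas, hμF]; simp
    have hint : Integrable (fun ω => M.t ω (G \ E)) μ := by
      refine Integrable.mono' (integrable_const (1:ℝ))
        ((M.t_meas _ hFmeas).aestronglyMeasurable) ?_
      exact ae_of_all _ fun ω => by
        rw [Real.norm_eq_abs, abs_of_nonneg (M.t_nonneg ω _)]; exact M.t_le_one ω _
    have hae : ∀ᵐ ω ∂μ, M.t ω (G \ E) = 0 := by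
      have := (integral_eq_zero_iff_of_nonneg (fun ω => M.t_nonneg ω _) hint).mp hI0
      filter_upwards [this] with ω hω using hω
    have hN : μ {ω' | ¬ M.t ω' (G \ E) = 0} = 0 := by
      rw [← ae_iff]; exact hae
    intro ω
    have hnot : ¬ M.P ω ⊆ {ω' | ¬ M.t ω' (G \ E) = 0} := by
      intro h
      have := measure_mono_null h hN
      exact absurd this (ne_of_gt (M.P_pos ω))
    obtain ⟨ω', hω'P, hω'⟩ : ∃ ω' ∈ M.P ω, M.t ω' (G \ E) = 0 := by
      by_contra hc
      push_neg at hc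
      exact hnot fun x hx => hc x hx
    have hle := hse ω hω'P (G \ E) hFmeas
    exact le_antisymm (hω' ▸ hle) (M.t_nonneg ω _)
  -- assemble
  have hKF : M.K E \ E ⊆ G \ E := fun ω hω => ⟨hKsub hω.1, hω.2⟩
  have hKmeas : MeasurableSet (M.K E \ E) := (M.K_meas E hE).diff hE
  refine ⟨hμF, measure_mono_null hKF hμF, fun ω => ⟨htF ω, ?_⟩⟩
  obtain ⟨ν, hνp, hνeq, hP1⟩ := hnu ω
  have h1 : ν (M.K E \ E) ≤ ν (G \ E) := measure_mono hKF
  have h2 : (ν (G \ E)).toReal = 0 := by rw [← hνeq _ hFmeas]; exact htF ω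
  rw [hνeq _ hKmeas]
  have : ν (G \ E) = 0 := by
    have hfin : ν (G \ E) ≠ ⊤ := measure_ne_top ν _
    rw [← ENNReal.ofReal_toReal hfin, h2]; simp
  have h0 : ν (M.K E \ E) = 0 := le_antisymm (this ▸ h1) zero_le
  rw [h0]; simp
end
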